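/- arXiv:1202.3006 — 9 statements merged into one kernel-verified Lean document; each statement's English description precedes it below -/
import Mathlib

section
/- Let P be an r-differential poset (r ≥ 1) and let n ≥ 0. Then the characteristic polynomial of the operator DU_n satisfies det(DU_n + tI) = ∏_{i=0}^{n} (t + r(i+1))^{Δp_{n-i}}, where Δp_m := p_m − p_{m−1} (with p_{−1} := 0). Equivalently, viewing DU_n as a p_n × p_n integer matrix, for every integer (or rational) t this determinant identity holds. -/
open Matrix

variable {α : Type*}

/-- The generalized factorial `ℓ!_{r,k} = (rℓ+k)(r(ℓ-1)+k)⋯(r·1+k)`. -/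
def genFac (r k ℓ : ℕ) : ℕ := ∏ i ∈ Finset.range ℓ, (r * (i + 1) + k)

open Classical in
/-- The matrix of the up map `U_n : ℚP_n → ℚP_{n+1}`. -/
noncomputable def upMat [PartialOrder α] (rk : α → ℕ) (n : ℕ) :
    Matrix {x : α // rk x = n + 1} {x : α // rk x = n} ℚ :=
  Matrix.of fun z x => if x.1 ⋖ z.1 then 1 else 0

/-- The matrix of `DU_n := D_{n+1} U_n`. -/
noncomputable def duMat [PartialOrder α] (rk : α → ℕ)
    [∀ n : ℕ, Fintype {x : α // rk x = n}] (n : ℕ) :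
    Matrix {x : α // rk x = n} {x : α // rk x = n} ℚ :=
  (upMat rk n)ᵀ * upMat rk n

/-- `upIter rk m j v` is `U^j v` for `v ∈ ℚP_m`. -/
noncomputable def upIter [PartialOrder α] (rk : α → ℕ)
    [∀ n : ℕ, Fintype {x : α // rk x = n}] (m : ℕ) :
    (j : ℕ) → ({x : α // rk x = m} → ℚ) → ({x : α // rk x = m + j} → ℚ)
  | 0, v => v
  | j + 1, v => (upMat rk (m + j)).mulVec (upIter rk m j v)

/-- Transport a vector along an equality of ranks. -/
noncomputable def rankCast [PartialOrder α] (rk : α → ℕ) (m n : ℕ)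
    (v : {x : α // rk x = m} → ℚ) : {x : α // rk x = n} → ℚ :=
  fun x => if h : rk x.1 = m then v ⟨x.1, h⟩ else 0

open Classical in
/-- The standard basis vector of `y` in `ℚP_n`. -/
noncomputable def basisVec [PartialOrder α] (rk : α → ℕ) (n : ℕ) (y : α) :
    {x : α // rk x = n} → ℚ :=
  fun x => if x.1 = y then 1 else 0

/-- The vector `v_{n,k} := Σ_{j=0}^n (-1)^j U^j t_{n-j} / (j+1)!_{r,k}`. -/
noncomputable def vVec [PartialOrder α] (rk : α → ℕ)
    [∀ n : ℕ, Fintype {x : α // rk x = n}] (t : ℕ → α) (r k n : ℕ) :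
    {x : α // rk x = n} → ℚ :=
  ∑ j ∈ Finset.range (n + 1),
    ((-1 : ℚ) ^ j / (genFac r k (j + 1) : ℚ)) •
      rankCast rk ((n - j) + j) n (upIter rk (n - j) j (basisVec rk (n - j) (t (n - j))))

/-! The commutation relation `D_{n+2} U_{n+1} = U_n D_{n+1} + r I` (conditions (D1) and (D2) read
entrywise) together with Sylvester's identity `det (A B + s) = s ^ (m - n) det (B A + s)` gives
`det (DU_{n+1} + t) = (t + r) ^ Δp_{n+1} det (DU_n + t + r)`; induction from `DU_0 = r I` unrolls
this into the product. The exponent is an honest natural number because `DU_n` is positive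
definite, so `U_n` is injective and `p_n ≤ p_{n+1}`. -/

theorem Matrix.det_mul_add_smul_one_of_card_le {R m n : Type*} [CommRing R] [Fintype m]
    [Fintype n] [DecidableEq m] [DecidableEq n] (A : Matrix m n R) (B : Matrix n m R)
    (hle : Fintype.card n ≤ Fintype.card m) (s : R) :
    (A * B + s • 1).det = s ^ (Fintype.card m - Fintype.card n) * (B * A + s • 1).det := by
  have := congrArg (Polynomial.eval s) (charpoly_mul_comm_of_le (-A) B hle)
  simpa [eval_charpoly, sub_eq_add_neg, add_comm, smul_one_eq_diagonal] using this

theorem Matrix.card_le_card_of_isUnit_mul {R m n : Type*} [CommRing R] [StrongRankCondition R]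
    [Fintype m] [Fintype n] [DecidableEq n] {A : Matrix n m R} {B : Matrix m n R}
    (h : IsUnit (A * B)) : Fintype.card n ≤ Fintype.card m :=
  calc Fintype.card n = (A * B).rank := (rank_of_isUnit _ h).symm
    _ ≤ A.rank := rank_mul_le_left A B
    _ ≤ Fintype.card m := rank_le_card_width A

theorem sum_boole_rank_eq_ncard (rk : α → ℕ) [∀ n : ℕ, Fintype {x : α // rk x = n}] {m : ℕ}
    {p : α → Prop} [DecidablePred p] (hp : ∀ z, p z → rk z = m) :
    ∑ z : {x : α // rk x = m}, (if p z.1 then (1 : ℚ) else 0) = {z : α | p z}.ncard := by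
  have himg : {z : α | p z} = Subtype.val '' {z : {x : α // rk x = m} | p z.1} := by
    ext z
    exact ⟨fun hz => ⟨⟨z, hp z hz⟩, hz, rfl⟩, fun ⟨w, hw, hwz⟩ => hwz ▸ hw⟩
  rw [himg, Set.ncard_image_of_injective _ Subtype.val_injective, Set.ncard_eq_toFinset_card',
    Finset.sum_boole, Set.toFinset_ofPred]

section DifferentialPoset

variable [PartialOrder α]

open Classical in
theorem ncard_upperCovers_inter (r : ℕ)
    (hD1 : ∀ x : α, {z : α | x ⋖ z}.ncard = {y : α | y ⋖ x}.ncard + r)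
    (hD2 : ∀ x y : α, x ≠ y →
      {z : α | z ⋖ x ∧ z ⋖ y}.ncard = {z : α | x ⋖ z ∧ y ⋖ z}.ncard) (x y : α) :
    {z : α | x ⋖ z ∧ y ⋖ z}.ncard = {z : α | z ⋖ x ∧ z ⋖ y}.ncard + if x = y then r else 0 := by
  rcases eq_or_ne x y with rfl | hxy
  · simpa using hD1 x
  · simp [hD2 x y hxy, hxy]

variable (rk : α → ℕ) [∀ n : ℕ, Fintype {x : α // rk x = n}]

theorem duMat_apply (hgrade : ∀ x y : α, x ⋖ y → rk y = rk x + 1) {n : ℕ}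
    (x y : {x : α // rk x = n}) :
    duMat rk n x y = ({z : α | x.1 ⋖ z ∧ y.1 ⋖ z}.ncard : ℚ) := by
  classical
  simp only [duMat, upMat, mul_apply, transpose_apply, of_apply, boole_mul, ← ite_and]
  exact sum_boole_rank_eq_ncard rk fun z (hz : x.1 ⋖ z ∧ y.1 ⋖ z) => by rw [hgrade _ _ hz.1, x.2]

theorem upMat_mul_transpose_apply (hgrade : ∀ x y : α, x ⋖ y → rk y = rk x + 1) {n : ℕ}
    (x y : {x : α // rk x = n + 1}) :
    (upMat rk n * (upMat rk n)ᵀ) x y = ({z : α | z ⋖ x.1 ∧ z ⋖ y.1}.ncard : ℚ) := by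
  classical
  simp only [upMat, mul_apply, transpose_apply, of_apply, boole_mul, ← ite_and]
  exact sum_boole_rank_eq_ncard rk fun z (hz : z ⋖ x.1 ∧ z ⋖ y.1) => by
    have := x.2 ▸ hgrade _ _ hz.1
    omega

open Classical in
theorem duMat_zero (r : ℕ) (hgrade : ∀ x y : α, x ⋖ y → rk y = rk x + 1)
    (hD1 : ∀ x : α, {z : α | x ⋖ z}.ncard = {y : α | y ⋖ x}.ncard + r)
    (hD2 : ∀ x y : α, x ≠ y →
      {z : α | z ⋖ x ∧ z ⋖ y}.ncard = {z : α | x ⋖ z ∧ y ⋖ z}.ncard) :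
    duMat rk 0 = (r : ℚ) • 1 := by
  ext x y
  have hbelow : {z : α | z ⋖ x.1 ∧ z ⋖ y.1} = ∅ :=
    Set.eq_empty_of_forall_notMem fun z hz => by have := x.2 ▸ hgrade _ _ hz.1; omega
  rw [duMat_apply rk hgrade, ncard_upperCovers_inter r hD1 hD2, hbelow, Matrix.smul_apply,
    one_apply]
  split_ifs <;> simp_all [Subtype.ext_iff]

open Classical in
theorem duMat_succ (r : ℕ) (hgrade : ∀ x y : α, x ⋖ y → rk y = rk x + 1)
    (hD1 : ∀ x : α, {z : α | x ⋖ z}.ncard = {y : α | y ⋖ x}.ncard + r)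
    (hD2 : ∀ x y : α, x ≠ y →
      {z : α | z ⋖ x ∧ z ⋖ y}.ncard = {z : α | x ⋖ z ∧ y ⋖ z}.ncard) (n : ℕ) :
    duMat rk (n + 1) = upMat rk n * (upMat rk n)ᵀ + (r : ℚ) • 1 := by
  ext x y
  rw [duMat_apply rk hgrade, ncard_upperCovers_inter r hD1 hD2, Matrix.add_apply,
    upMat_mul_transpose_apply rk hgrade, Matrix.smul_apply, one_apply]
  split_ifs <;> simp_all [Subtype.ext_iff]

open Classical in
theorem duMat_posDef {r : ℕ} (hr : 1 ≤ r) (hgrade : ∀ x y : α, x ⋖ y → rk y = rk x + 1)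
    (hD1 : ∀ x : α, {z : α | x ⋖ z}.ncard = {y : α | y ⋖ x}.ncard + r)
    (hD2 : ∀ x y : α, x ≠ y →
      {z : α | z ⋖ x ∧ z ⋖ y}.ncard = {z : α | x ⋖ z ∧ y ⋖ z}.ncard) (n : ℕ) :
    (duMat rk n).PosDef := by
  have hrI : ((r : ℚ) • 1 : Matrix {x : α // rk x = n} _ ℚ).PosDef :=
    PosDef.one.smul (by exact_mod_cast hr)
  cases n with
  | zero => rwa [duMat_zero rk r hgrade hD1 hD2]
  | succ n =>
    rw [duMat_succ rk r hgrade hD1 hD2]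
    refine hrI.posSemidef_add ?_
    simpa using posSemidef_conjTranspose_mul_self (upMat rk n)ᵀ

theorem card_rank_le_card_rank_succ {r : ℕ} (hr : 1 ≤ r)
    (hgrade : ∀ x y : α, x ⋖ y → rk y = rk x + 1)
    (hD1 : ∀ x : α, {z : α | x ⋖ z}.ncard = {y : α | y ⋖ x}.ncard + r)
    (hD2 : ∀ x y : α, x ≠ y →
      {z : α | z ⋖ x ∧ z ⋖ y}.ncard = {z : α | x ⋖ z ∧ y ⋖ z}.ncard) (n : ℕ) :
    Fintype.card {x : α // rk x = n} ≤ Fintype.card {x : α // rk x = n + 1} := by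
  classical
  exact card_le_card_of_isUnit_mul (duMat_posDef rk hr hgrade hD1 hD2 n).isUnit

def rankCardDiff (m : ℕ) : ℤ :=
  (Fintype.card {x : α // rk x = m} : ℤ) -
    (if m = 0 then 0 else (Fintype.card {x : α // rk x = m - 1} : ℤ))

open Classical in
theorem det_duMat_succ_add_smul {r : ℕ} (hr : 1 ≤ r)
    (hgrade : ∀ x y : α, x ⋖ y → rk y = rk x + 1)
    (hD1 : ∀ x : α, {z : α | x ⋖ z}.ncard = {y : α | y ⋖ x}.ncard + r)
    (hD2 : ∀ x y : α, x ≠ y →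
      {z : α | z ⋖ x ∧ z ⋖ y}.ncard = {z : α | x ⋖ z ∧ y ⋖ z}.ncard) (n : ℕ) (t : ℚ) :
    (duMat rk (n + 1) + t • 1).det =
      (t + r) ^ rankCardDiff rk (n + 1) * (duMat rk n + (t + r) • 1).det := by
  have hle := card_rank_le_card_rank_succ rk hr hgrade hD1 hD2 n
  rw [duMat_succ rk r hgrade hD1 hD2, add_assoc, ← add_smul, add_comm (r : ℚ),
    det_mul_add_smul_one_of_card_le _ _ hle, rankCardDiff, if_neg n.succ_ne_zero,
    Nat.add_sub_cancel, ← Nat.cast_sub hle, zpow_natCast]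
  rfl

end DifferentialPoset

open Classical in
/-- **Stanley's eigenvalue theorem.** For an `r`-differential poset,
`det(DU_n + tI) = ∏_{i=0}^n (t + r(i+1))^{Δp_{n-i}}` where `Δp_m = p_m - p_{m-1}`
(with `p_{-1} := 0`). -/
theorem stanley_eigenvalue_theorem [PartialOrder α] [OrderBot α]
    (rk : α → ℕ) (r : ℕ) [∀ n : ℕ, Fintype {x : α // rk x = n}]
    (hr : 1 ≤ r) (hbot : rk ⊥ = 0)
    (hgrade : ∀ x y : α, x ⋖ y → rk y = rk x + 1)
    (hdown : ∀ x : α, x ≠ ⊥ → ∃ y : α, y ⋖ x)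
    (hD1 : ∀ x : α, {z : α | x ⋖ z}.ncard = {y : α | y ⋖ x}.ncard + r)
    (hD2 : ∀ x y : α, x ≠ y →
      {z : α | z ⋖ x ∧ z ⋖ y}.ncard = {z : α | x ⋖ z ∧ y ⋖ z}.ncard)
    (n : ℕ) (t : ℚ) :
    (duMat rk n + t • 1).det =
      ∏ i ∈ Finset.range (n + 1),
        (t + (r : ℚ) * ((i : ℚ) + 1)) ^
          ((Fintype.card {x : α // rk x = n - i} : ℤ) -
            (if n - i = 0 then 0 else (Fintype.card {x : α // rk x = n - i - 1} : ℤ))) := by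
  change _ = ∏ i ∈ Finset.range (n + 1), (t + (r : ℚ) * ((i : ℚ) + 1)) ^ rankCardDiff rk (n - i)
  induction n generalizing t with
  | zero =>
    rw [duMat_zero rk r hgrade hD1 hD2, ← add_smul, det_smul, det_one, mul_one,
      Finset.prod_range_one, rankCardDiff, if_pos rfl, sub_zero, zpow_natCast]
    norm_num [add_comm]
  | succ n ih =>
    rw [det_duMat_succ_add_smul rk hr hgrade hD1 hD2, ih,
      Finset.prod_range_succ' _ (n + 1), mul_comm]
    congr 1
    · refine Finset.prod_congr rfl fun i _ => ?_
      rw [Nat.succ_sub_succ]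
      push_cast
      ring_nf
    · simp
end

section
/- Let P be an r-differential poset. Then its rank sizes weakly increase: p_0 ≤ p_1 ≤ p_2 ≤ ⋯, i.e., p_{n−1} ≤ p_n for every n ≥ 1. -/
variable {α : Type*}

open Classical in
/-- Counting lemma: a set of elements all of rank `m` has `ncard` equal to the
cardinality of the corresponding filter inside the (finite) rank-`m` subtype. -/
lemma ncard_eq_filter_card_aux [PartialOrder α] (rk : α → ℕ) (m : ℕ)
    [Fintype {x : α // rk x = m}] (s : Set α) (hs : ∀ z ∈ s, rk z = m) :
    s.ncard =
      (Finset.univ.filter (fun z : {x : α // rk x = m} => (z : α) ∈ s)).card := by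
  classical
  calc s.ncard = Nat.card s := (Nat.card_coe_set_eq s).symm
    _ = Nat.card {z : {x : α // rk x = m} // (z : α) ∈ s} :=
        Nat.card_congr ⟨fun a => ⟨⟨a.1, hs a.1 a.2⟩, a.2⟩, fun b => ⟨b.1.1, b.2⟩,
          fun a => rfl, fun b => rfl⟩
    _ = Fintype.card {z : {x : α // rk x = m} // (z : α) ∈ s} :=
        Nat.card_eq_fintype_card
    _ = _ := Fintype.card_subtype _

lemma card_filter_congr_aux {β : Type*} [Fintype β] {p q : β → Prop}
    [DecidablePred p] [DecidablePred q] (h : ∀ b, p b ↔ q b) :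
    (Finset.univ.filter p).card = (Finset.univ.filter q).card := by
  congr 1
  ext b
  simp [Finset.mem_filter, h b]

/-- expansion of a "sum of squares" of incidence sums -/
lemma sum_sq_incidence {β γ : Type*} [Fintype β] [Fintype γ]
    (R : β → γ → Prop) [∀ x z, Decidable (R x z)] (f : β → ℚ) :
    ∑ z : γ, (∑ x : β, if R x z then f x else 0) ^ 2 =
      ∑ x : β, ∑ y : β, f x * f y *
        ((Finset.univ.filter fun z : γ => R x z ∧ R y z).card : ℚ) := by
  classical
  have key : ∀ z : γ, (∑ x : β, if R x z then f x else 0) ^ 2 =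
      ∑ x : β, ∑ y : β, if (R x z ∧ R y z) then f x * f y else 0 := by
    intro z
    rw [sq, Finset.sum_mul_sum]
    apply Finset.sum_congr rfl; intro x _
    apply Finset.sum_congr rfl; intro y _
    split_ifs with h1 h2 h3 <;> simp_all
  rw [Finset.sum_congr rfl fun z _ => key z, Finset.sum_comm]
  apply Finset.sum_congr rfl; intro x _
  rw [Finset.sum_comm]
  apply Finset.sum_congr rfl; intro y _
  rw [← Finset.sum_filter, Finset.sum_const, nsmul_eq_mul, mul_comm]

/-- The rank sizes of an `r`-differential poset weakly increase:
`p_0 ≤ p_1 ≤ p_2 ≤ ⋯`. -/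
theorem rank_sizes_weakly_increase [PartialOrder α] [OrderBot α]
    (rk : α → ℕ) (r : ℕ) [∀ n : ℕ, Fintype {x : α // rk x = n}]
    (hr : 1 ≤ r) (hbot : rk ⊥ = 0)
    (hgrade : ∀ x y : α, x ⋖ y → rk y = rk x + 1)
    (hdown : ∀ x : α, x ≠ ⊥ → ∃ y : α, y ⋖ x)
    (hD1 : ∀ x : α, {z : α | x ⋖ z}.ncard = {y : α | y ⋖ x}.ncard + r)
    (hD2 : ∀ x y : α, x ≠ y →
      {z : α | z ⋖ x ∧ z ⋖ y}.ncard = {z : α | x ⋖ z ∧ y ⋖ z}.ncard)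
    (n : ℕ) :
    Fintype.card {x : α // rk x = n} ≤ Fintype.card {x : α // rk x = n + 1} := by
  classical
  -- counting functions
  set up : {x : α // rk x = n} → {x : α // rk x = n} → ℕ := fun x y =>
    (Finset.univ.filter fun z : {x : α // rk x = n + 1} =>
      (↑x : α) ⋖ ↑z ∧ (↑y : α) ⋖ ↑z).card with hup
  set down : {x : α // rk x = n} → {x : α // rk x = n} → ℕ := fun x y =>
    (Finset.univ.filter fun w : {x : α // rk x = n - 1} =>
      (↑w : α) ⋖ ↑x ∧ (↑w : α) ⋖ ↑y).card with hdown'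
  -- translation of up/down counts to ncards
  have hupn : ∀ x y : {x : α // rk x = n}, (up x y : ℕ) =
      {z : α | (↑x : α) ⋖ z ∧ (↑y : α) ⋖ z}.ncard := by
    intro x y
    rw [ncard_eq_filter_card_aux rk (n + 1) _ (fun z hz => by
      rw [hgrade _ _ hz.1, x.2])]
    simp only [hup]
    exact @card_filter_congr_aux _ _ _ _ _ (fun _ => Classical.propDecidable _) fun z => Iff.rfl
  have hdownn : ∀ x y : {x : α // rk x = n}, (down x y : ℕ) =
      {w : α | w ⋖ (↑x : α) ∧ w ⋖ (↑y : α)}.ncard := by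
    intro x y
    rw [ncard_eq_filter_card_aux rk (n - 1) _ (fun w hw => by
      have := hgrade _ _ hw.1
      rw [x.2] at this
      omega)]
    simp only [hdown']
    exact @card_filter_congr_aux _ _ _ _ _ (fun _ => Classical.propDecidable _) fun w => Iff.rfl
  -- off-diagonal equality
  have h_off : ∀ x y : {x : α // rk x = n}, x ≠ y → up x y = down x y := by
    intro x y hxy
    have hne : (↑x : α) ≠ ↑y := Subtype.coe_ne_coe.mpr hxy
    rw [hupn, hdownn, ← hD2 _ _ hne]
  -- diagonal equality
  have h_diag : ∀ x : {x : α // rk x = n}, up x x = down x x + r := by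
    intro x
    have h1 : {z : α | (↑x : α) ⋖ z ∧ (↑x : α) ⋖ z} = {z : α | (↑x : α) ⋖ z} := by
      ext z; simp
    have h2 : {w : α | w ⋖ (↑x : α) ∧ w ⋖ (↑x : α)} = {w : α | w ⋖ (↑x : α)} := by
      ext w; simp
    rw [hupn, hdownn, h1, h2, hD1]
  -- the up map as a linear map
  let U : ({x : α // rk x = n} → ℚ) →ₗ[ℚ] ({x : α // rk x = n + 1} → ℚ) :=
    { toFun := fun f z => ∑ x : {x : α // rk x = n}, if (↑x : α) ⋖ ↑z then f x else 0
      map_add' := by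
        intro f g
        funext z
        simp only [Pi.add_apply]
        rw [← Finset.sum_add_distrib]
        apply Finset.sum_congr rfl
        intro x _
        split <;> simp
      map_smul' := by
        intro c f
        funext z
        simp only [RingHom.id_apply, Pi.smul_apply, smul_eq_mul, Finset.mul_sum]
        apply Finset.sum_congr rfl
        intro x _
        split <;> simp }
  -- key norm identity + injectivity
  have hinj : Function.Injective U := by
    rw [← LinearMap.ker_eq_bot, LinearMap.ker_eq_bot']
    intro f hf
    by_contra hfne
    obtain ⟨x₀, hx₀⟩ := Function.ne_iff.mp hfne
    -- expansions
    have eU : ∑ z : {x : α // rk x = n + 1}, (U f z) ^ 2 =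
        ∑ x, ∑ y, f x * f y * (up x y : ℚ) :=
      sum_sq_incidence (fun (x : {x : α // rk x = n}) (z : {x : α // rk x = n + 1}) =>
        (↑x : α) ⋖ ↑z) f
    have eD : ∑ w : {x : α // rk x = n - 1},
        (∑ x : {x : α // rk x = n}, if (↑w : α) ⋖ ↑x then f x else 0) ^ 2 =
        ∑ x, ∑ y, f x * f y * (down x y : ℚ) := by
      have := sum_sq_incidence (fun (x : {x : α // rk x = n}) (w : {x : α // rk x = n - 1}) =>
        (↑w : α) ⋖ ↑x) f
      rw [this]
    -- combine
    have hcomb : ∑ x, ∑ y, f x * f y * (up x y : ℚ) =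
        (∑ x, ∑ y, f x * f y * (down x y : ℚ)) + (r : ℚ) * ∑ x, f x ^ 2 := by
      have key : ∀ x y : {x : α // rk x = n},
          f x * f y * (up x y : ℚ) =
            f x * f y * (down x y : ℚ) + (if x = y then (r : ℚ) * f x ^ 2 else 0) := by
        intro x y
        by_cases h : x = y
        · subst h
          rw [h_diag x, if_pos rfl]
          push_cast
          ring
        · rw [h_off x y h, if_neg h, add_zero]
      calc ∑ x, ∑ y, f x * f y * (up x y : ℚ)
          = ∑ x, ∑ y, (f x * f y * (down x y : ℚ) +
              (if x = y then (r : ℚ) * f x ^ 2 else 0)) := by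
            exact Finset.sum_congr rfl fun x _ => Finset.sum_congr rfl fun y _ => key x y
        _ = (∑ x, ∑ y, f x * f y * (down x y : ℚ)) +
              ∑ x, ∑ y, (if x = y then (r : ℚ) * f x ^ 2 else 0) := by
            rw [← Finset.sum_add_distrib]
            exact Finset.sum_congr rfl fun x _ => Finset.sum_add_distrib
        _ = (∑ x, ∑ y, f x * f y * (down x y : ℚ)) + (r : ℚ) * ∑ x, f x ^ 2 := by
            congr 1
            rw [Finset.mul_sum]
            apply Finset.sum_congr rfl
            intro x _
            rw [Finset.sum_ite_eq]
            simp
    -- positivity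
    have hDnn : 0 ≤ ∑ x, ∑ y, f x * f y * (down x y : ℚ) := by
      rw [← eD]
      exact Finset.sum_nonneg fun w _ => sq_nonneg _
    have hfpos : 0 < ∑ x, f x ^ 2 := by
      apply Finset.sum_pos' (fun x _ => sq_nonneg _)
      exact ⟨x₀, Finset.mem_univ _, sq_pos_of_ne_zero hx₀⟩
    have hrpos : (0 : ℚ) < r := by exact_mod_cast Nat.lt_of_lt_of_le Nat.zero_lt_one hr
    have hpos : 0 < ∑ z : {x : α // rk x = n + 1}, (U f z) ^ 2 := by
      rw [eU, hcomb]
      have : 0 < (r : ℚ) * ∑ x, f x ^ 2 := mul_pos hrpos hfpos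
      linarith
    rw [hf] at hpos
    simp at hpos
  calc Fintype.card {x : α // rk x = n}
      = Module.finrank ℚ ({x : α // rk x = n} → ℚ) :=
        (Module.finrank_fintype_fun_eq_card ℚ).symm
    _ ≤ Module.finrank ℚ ({x : α // rk x = n + 1} → ℚ) :=
        LinearMap.finrank_le_finrank_of_injective hinj
    _ = Fintype.card {x : α // rk x = n + 1} :=
        Module.finrank_fintype_fun_eq_card ℚ
end

section
/- Let P be an r-differential poset. Then for every n ≥ 1 the commutation relation DU_n − UD_n = r·I holds as an identity of linear operators on ℤP_n (equivalently of p_n × p_n integer matrices), where I is the identity. For n = 0 one has DU_0 = r·I. -/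
open Matrix

variable {α : Type*}

open Classical in
/-- The matrix of the up map `U_n : ℤP_n → ℤP_{n+1}`. -/
noncomputable def upMatZ [PartialOrder α] (rk : α → ℕ) (n : ℕ) :
    Matrix {x : α // rk x = n + 1} {x : α // rk x = n} ℤ :=
  Matrix.of fun z x => if x.1 ⋖ z.1 then 1 else 0

open Classical in
lemma ncard_eq_card_filter' [PartialOrder α] (rk : α → ℕ) (m : ℕ)
    [Fintype {x : α // rk x = m}] (P : α → Prop)
    (h : ∀ z, P z → rk z = m) :
    {z : α | P z}.ncard
      = (Finset.univ.filter (fun z : {x : α // rk x = m} => P z.1)).card := by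
  have heq : {z : α | P z}
      = ↑((Finset.univ.filter (fun z : {x : α // rk x = m} => P z.1)).image Subtype.val) := by
    ext z
    simp only [Finset.coe_image, Finset.mem_coe, Finset.mem_filter, Finset.mem_univ, true_and,
      Set.mem_setOf_eq, Set.mem_image]
    constructor
    · intro hz; exact ⟨⟨z, h z hz⟩, hz, rfl⟩
    · rintro ⟨⟨w, hw⟩, hPw, rfl⟩; exact hPw
  rw [heq, Set.ncard_coe_finset, Finset.card_image_of_injective _ Subtype.val_injective]

open Classical in
lemma sum_ite_eq_ncard [PartialOrder α] (rk : α → ℕ) (m : ℕ)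
    [Fintype {x : α // rk x = m}] (P : α → Prop)
    (h : ∀ z, P z → rk z = m) :
    (∑ z : {x : α // rk x = m}, (if P z.1 then (1 : ℤ) else 0))
      = ({z : α | P z}.ncard : ℤ) := by
  rw [ncard_eq_card_filter' rk m P h]
  simp [Finset.sum_boole]

open Classical in
/-- In an `r`-differential poset, `DU_n - UD_n = r·I` for `n ≥ 1`
(here stated at rank `n+1` for every `n ≥ 0`), and `DU_0 = r·I`. -/
theorem du_sub_ud_eq_smul_id [PartialOrder α] [OrderBot α]
    (rk : α → ℕ) (r : ℕ) [∀ n : ℕ, Fintype {x : α // rk x = n}]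
    (hr : 1 ≤ r) (hbot : rk ⊥ = 0)
    (hgrade : ∀ x y : α, x ⋖ y → rk y = rk x + 1)
    (hdown : ∀ x : α, x ≠ ⊥ → ∃ y : α, y ⋖ x)
    (hD1 : ∀ x : α, {z : α | x ⋖ z}.ncard = {y : α | y ⋖ x}.ncard + r)
    (hD2 : ∀ x y : α, x ≠ y →
      {z : α | z ⋖ x ∧ z ⋖ y}.ncard = {z : α | x ⋖ z ∧ y ⋖ z}.ncard)
    :
    ((upMatZ rk 0)ᵀ * upMatZ rk 0 = (r : ℤ) • 1) ∧
    (∀ n : ℕ,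
      (upMatZ rk (n + 1))ᵀ * upMatZ rk (n + 1) - upMatZ rk n * (upMatZ rk n)ᵀ
        = (r : ℤ) • 1) := by
  -- entry formula for UᵀU at level n
  have hUtU : ∀ (n : ℕ) (x y : {x : α // rk x = n}),
      ((upMatZ rk n)ᵀ * upMatZ rk n) x y
        = ({z : α | x.1 ⋖ z ∧ y.1 ⋖ z}.ncard : ℤ) := by
    intro n x y
    have h1 : ((upMatZ rk n)ᵀ * upMatZ rk n) x y
        = ∑ z : {x : α // rk x = n + 1},
            (if x.1 ⋖ z.1 ∧ y.1 ⋖ z.1 then (1 : ℤ) else 0) := by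
      simp only [Matrix.mul_apply, Matrix.transpose_apply, upMatZ, Matrix.of_apply]
      refine Finset.sum_congr rfl fun z _ => ?_
      by_cases h1 : x.1 ⋖ z.1 <;> by_cases h2 : y.1 ⋖ z.1 <;> simp [h1, h2]
    rw [h1]
    convert sum_ite_eq_ncard rk (n + 1) (fun z => x.1 ⋖ z ∧ y.1 ⋖ z)
      (fun z hz => by rw [hgrade _ _ hz.1, x.2]) using 2
    split_ifs <;> rfl
  -- entry formula for UUᵀ at level n+1
  have hUUt : ∀ (n : ℕ) (x y : {x : α // rk x = n + 1}),
      (upMatZ rk n * (upMatZ rk n)ᵀ) x y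
        = ({w : α | w ⋖ x.1 ∧ w ⋖ y.1}.ncard : ℤ) := by
    intro n x y
    have h1 : (upMatZ rk n * (upMatZ rk n)ᵀ) x y
        = ∑ w : {x : α // rk x = n},
            (if w.1 ⋖ x.1 ∧ w.1 ⋖ y.1 then (1 : ℤ) else 0) := by
      simp only [Matrix.mul_apply, Matrix.transpose_apply, upMatZ, Matrix.of_apply]
      refine Finset.sum_congr rfl fun w _ => ?_
      by_cases h1 : w.1 ⋖ x.1 <;> by_cases h2 : w.1 ⋖ y.1 <;> simp [h1, h2]
    rw [h1]
    convert sum_ite_eq_ncard rk n (fun w => w ⋖ x.1 ∧ w ⋖ y.1) (fun w hw => by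
      have h2 := hgrade _ _ hw.1
      rw [x.2] at h2
      omega) using 2
    split_ifs <;> rfl
  constructor
  · ext x y
    rw [hUtU 0 x y]
    by_cases hxy : x = y
    · subst hxy
      have hset : {z : α | x.1 ⋖ z ∧ x.1 ⋖ z} = {z : α | x.1 ⋖ z} := by
        ext z; simp
      have hempty : {y : α | y ⋖ x.1} = ∅ := by
        ext w
        simp only [Set.mem_setOf_eq, Set.mem_empty_iff_false, iff_false]
        intro hw
        have := hgrade _ _ hw
        rw [x.2] at this
        omega
      rw [hset, hD1 x.1, hempty]
      simp
    · have hxy' : x.1 ≠ y.1 := fun h => hxy (Subtype.ext h)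
      have hempty : {z : α | z ⋖ x.1 ∧ z ⋖ y.1} = ∅ := by
        ext w
        simp only [Set.mem_setOf_eq, Set.mem_empty_iff_false, iff_false]
        rintro ⟨hw, -⟩
        have := hgrade _ _ hw
        rw [x.2] at this
        omega
      rw [← hD2 _ _ hxy', hempty]
      simp [Matrix.one_apply, hxy]
  · intro n
    ext x y
    rw [Matrix.sub_apply, hUtU (n + 1) x y, hUUt n x y]
    by_cases hxy : x = y
    · subst hxy
      have hset : {z : α | x.1 ⋖ z ∧ x.1 ⋖ z} = {z : α | x.1 ⋖ z} := by
        ext z; simp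
      have hset2 : {w : α | w ⋖ x.1 ∧ w ⋖ x.1} = {w : α | w ⋖ x.1} := by
        ext w; simp
      rw [hset, hset2, hD1 x.1]
      push_cast
      simp
    · have hxy' : x.1 ≠ y.1 := fun h => hxy (Subtype.ext h)
      rw [← hD2 _ _ hxy']
      simp [Matrix.one_apply, hxy]
end

section
/- Let P be an r-differential poset, and let j_{m−1} ⋖ j_m be any covering pair in P such that each of j_{m−1} and j_m covers at most one element of P. Then for any integer n ≥ m this pair extends to a saturated chain j_{m−1} ⋖ j_m ⋖ j_{m+1} ⋖ ⋯ ⋖ j_{n−1} ⋖ j_n in which every element j_ℓ covers at most one element of P. -/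
/-!
If `x ⋖ y` and `y` covers only `x`, then every other element `z` with a common upper cover
with `y` must cover `x`, since by (D2) the pair `z, y` has a common lower cover and it can only
be `x`; moreover `z` and `y` have at most one common upper cover. So if every upper cover of `y`
covered a second element, choosing one for each would inject the `1 + r` upper covers of `y`
into the at most `r` upper covers of `x` other than `y`. Hence some upper cover of `y` covers
only `y`, and iterating this step builds the chain.
-/

variable {α : Type*}

section Covers

variable [PartialOrder α]

lemma setOf_covBy_eq_singleton {x y : α} (hfin : {z | z ⋖ y}.Finite) (hxy : x ⋖ y)
    (hy : {z | z ⋖ y}.ncard ≤ 1) : {z | z ⋖ y} = {x} :=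
  Set.eq_singleton_iff_unique_mem.mpr ⟨hxy, fun z hz => (Set.ncard_le_one hfin).mp hy z hz x hxy⟩

lemma ncard_common_upper_covers_le_one
    (hD2 : ∀ x y : α, x ≠ y →
      {z : α | z ⋖ x ∧ z ⋖ y}.ncard = {z : α | x ⋖ z ∧ y ⋖ z}.ncard)
    {x y z : α} (hdy : {u | u ⋖ y} = {x}) (hzy : z ≠ y) :
    {u | z ⋖ u ∧ y ⋖ u}.ncard ≤ 1 := by
  rw [← hD2 z y hzy, ← Set.ncard_singleton x]
  exact Set.ncard_le_ncard (fun u hu => hdy ▸ hu.2)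

lemma covBy_of_common_upper_cover
    (hD2 : ∀ x y : α, x ≠ y →
      {z : α | z ⋖ x ∧ z ⋖ y}.ncard = {z : α | x ⋖ z ∧ y ⋖ z}.ncard)
    {x y z w : α} (hfin : {u | z ⋖ u}.Finite) (hdy : {u | u ⋖ y} = {x}) (hzy : z ≠ y)
    (hzw : z ⋖ w) (hyw : y ⋖ w) : x ⋖ z := by
  have hupper : {u | z ⋖ u ∧ y ⋖ u}.ncard ≠ 0 :=
    (Set.ncard_pos (s := {u | z ⋖ u ∧ y ⋖ u}) (hfin.subset fun _ hu => hu.1)).mpr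
      ⟨w, hzw, hyw⟩ |>.ne'
  rw [← hD2 z y hzy] at hupper
  obtain ⟨u, huz, huy⟩ := Set.nonempty_of_ncard_ne_zero hupper
  rwa [show u = x from hdy.subset huy] at huz

lemma exists_covBy_ncard_le_one {r : ℕ}
    (hD1 : ∀ x : α, {z : α | x ⋖ z}.ncard = {y : α | y ⋖ x}.ncard + r)
    (hD2 : ∀ x y : α, x ≠ y →
      {z : α | z ⋖ x ∧ z ⋖ y}.ncard = {z : α | x ⋖ z ∧ y ⋖ z}.ncard)
    (hupfin : ∀ a : α, {u | a ⋖ u}.Finite) {x y : α} (hdownfin : {u | u ⋖ y}.Finite)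
    (hxy : x ⋖ y) (hx : {z | z ⋖ x}.ncard ≤ 1) (hy : {z | z ⋖ y}.ncard ≤ 1) :
    ∃ w, y ⋖ w ∧ {z | z ⋖ w}.ncard ≤ 1 := by
  have hdy := setOf_covBy_eq_singleton hdownfin hxy hy
  by_contra! hcon
  -- the implication sits under `∃` so that `choose` yields a total function `f : α → α`
  have hsecond : ∀ w, ∃ z, y ⋖ w → z ⋖ w ∧ z ≠ y := fun w => by
    by_cases hyw : y ⋖ w
    · exact (Set.exists_ne_of_one_lt_ncard (hcon w hyw) y).imp fun _ hz _ => hz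
    · exact ⟨y, fun h => absurd h hyw⟩
  choose f hf using hsecond
  have hmaps : ∀ w ∈ {w | y ⋖ w}, f w ∈ {u | x ⋖ u} \ {y} := fun w hyw =>
    ⟨covBy_of_common_upper_cover hD2 (hupfin _) hdy (hf w hyw).2 (hf w hyw).1 hyw, (hf w hyw).2⟩
  have hinj : Set.InjOn f {w | y ⋖ w} := fun w₁ hw₁ w₂ hw₂ heq =>
    (Set.ncard_le_one ((hupfin (f w₁)).subset fun u hu => hu.1)).mp
      (ncard_common_upper_covers_le_one hD2 hdy (hf w₁ hw₁).2)
      w₁ ⟨(hf w₁ hw₁).1, hw₁⟩ w₂ ⟨heq ▸ (hf w₂ hw₂).1, hw₂⟩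
  have hcard := Set.ncard_le_ncard_of_injOn f hmaps hinj (hupfin x).sdiff
  rw [Set.ncard_sdiff_singleton_of_mem (s := {u | x ⋖ u}) hxy, hD1 x, hD1 y, hdy, Set.ncard_singleton] at hcard
  omega

lemma exists_chain_covBy_ncard_le_one {r : ℕ}
    (hD1 : ∀ x : α, {z : α | x ⋖ z}.ncard = {y : α | y ⋖ x}.ncard + r)
    (hD2 : ∀ x y : α, x ≠ y →
      {z : α | z ⋖ x ∧ z ⋖ y}.ncard = {z : α | x ⋖ z ∧ y ⋖ z}.ncard)
    (hupfin : ∀ a : α, {u | a ⋖ u}.Finite) (hdownfin : ∀ a : α, {u | u ⋖ a}.Finite)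
    {x y : α} (hxy : x ⋖ y) (hx : {z | z ⋖ x}.ncard ≤ 1) (hy : {z | z ⋖ y}.ncard ≤ 1) :
    ∃ c : ℕ → α, c 0 = x ∧ c 1 = y ∧ ∀ k, c k ⋖ c (k + 1) ∧ {z | z ⋖ c k}.ncard ≤ 1 := by
  let ThinPair := {p : α × α // p.1 ⋖ p.2 ∧ {z | z ⋖ p.1}.ncard ≤ 1 ∧ {z | z ⋖ p.2}.ncard ≤ 1}
  have hstep : ∀ p : ThinPair, ∃ q : ThinPair, q.1.1 = p.1.2 := fun ⟨(a, b), hab, ha, hb⟩ =>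
    let ⟨w, hbw, hw⟩ := exists_covBy_ncard_le_one hD1 hD2 hupfin (hdownfin b) hab ha hb
    ⟨⟨(b, w), hbw, hb, hw⟩, rfl⟩
  choose next hnext using hstep
  let pairs : ℕ → ThinPair := fun k => next^[k] ⟨(x, y), hxy, hx, hy⟩
  have hpairs : ∀ k, (pairs (k + 1)).1.1 = (pairs k).1.2 := fun k => by
    simp only [pairs, Function.iterate_succ_apply', hnext]
  refine ⟨fun k => (pairs k).1.1, rfl, hpairs 0, fun k => ⟨?_, (pairs k).2.2.1⟩⟩
  show (pairs k).1.1 ⋖ (pairs (k + 1)).1.1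
  rw [hpairs]
  exact (pairs k).2.1

end Covers

section Graded

variable {rk : α → ℕ} [∀ n : ℕ, Fintype {x : α // rk x = n}]

lemma finite_setOf_rk_eq (k : ℕ) : {z : α | rk z = k}.Finite :=
  Set.finite_coe_iff.mp (Finite.of_fintype {x : α // rk x = k})

variable [PartialOrder α]

lemma finite_lower_covers (hgrade : ∀ x y : α, x ⋖ y → rk y = rk x + 1) (a : α) :
    {z : α | z ⋖ a}.Finite :=
  (finite_setOf_rk_eq (rk a - 1)).subset fun z hz => by
    have := hgrade z a hz
    show rk z = rk a - 1
    omega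

lemma finite_upper_covers (hgrade : ∀ x y : α, x ⋖ y → rk y = rk x + 1) (a : α) :
    {z : α | a ⋖ z}.Finite :=
  (finite_setOf_rk_eq (rk a + 1)).subset fun z hz => hgrade a z hz

end Graded

/-- A covering pair `x ⋖ y` in an `r`-differential poset in which both elements
cover at most one element extends, for any `n ≥ rank y`, to a saturated chain up to
rank `n` all of whose elements cover at most one element. -/
theorem covering_pair_extends_to_chain [PartialOrder α] [OrderBot α]
    (rk : α → ℕ) (r : ℕ) [∀ n : ℕ, Fintype {x : α // rk x = n}]
    (hr : 1 ≤ r) (hbot : rk ⊥ = 0)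
    (hgrade : ∀ x y : α, x ⋖ y → rk y = rk x + 1)
    (hdown : ∀ x : α, x ≠ ⊥ → ∃ y : α, y ⋖ x)
    (hD1 : ∀ x : α, {z : α | x ⋖ z}.ncard = {y : α | y ⋖ x}.ncard + r)
    (hD2 : ∀ x y : α, x ≠ y →
      {z : α | z ⋖ x ∧ z ⋖ y}.ncard = {z : α | x ⋖ z ∧ y ⋖ z}.ncard)
    (x y : α) (hxy : x ⋖ y)
    (hx : {z : α | z ⋖ x}.ncard ≤ 1) (hy : {z : α | z ⋖ y}.ncard ≤ 1)
    (n : ℕ) (hn : rk y ≤ n) :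
    ∃ c : ℕ → α, c (rk y - 1) = x ∧ c (rk y) = y ∧
      (∀ ℓ : ℕ, rk y ≤ ℓ → ℓ < n → c ℓ ⋖ c (ℓ + 1)) ∧
      (∀ ℓ : ℕ, rk y - 1 ≤ ℓ → ℓ ≤ n → {z : α | z ⋖ c ℓ}.ncard ≤ 1) := by
  obtain ⟨c, hc0, hc1, hc⟩ := exists_chain_covBy_ncard_le_one hD1 hD2
    (finite_upper_covers hgrade) (finite_lower_covers hgrade) hxy hx hy
  have hry : 1 ≤ rk y := by have := hgrade x y hxy; omega
  refine ⟨fun ℓ => c (ℓ + 1 - rk y), ?_, ?_, fun ℓ hℓ _ => ?_, fun ℓ _ _ => (hc _).2⟩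
  · simpa only [Nat.sub_add_cancel hry, Nat.sub_self] using hc0
  · simpa only [Nat.add_sub_cancel_left] using hc1
  · simpa only [show ℓ + 1 + 1 - rk y = ℓ + 1 - rk y + 1 by omega] using (hc _).1
end

section
/- Let P be an r-differential poset. Then there exist two infinite saturated chains t_0 ⋖ t_1 ⋖ t_2 ⋖ ⋯ and s_0 ⋖ s_1 ⋖ s_2 ⋖ ⋯ in P with the following properties: (i) rank(t_n) = rank(s_n) = n for all n; (ii) if r = 1 then t_n ≠ s_n for all n ≥ 2, while t_0 = s_0 and t_1 = s_1; (iii) if r > 1 then t_n ≠ s_n for all n ≥ 1, while t_0 = s_0; (iv) each t_n and each s_n covers at most one element of P. -/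
variable {α : Type*}

section Aux
variable [PartialOrder α] [OrderBot α] {rk : α → ℕ} {r : ℕ}
  [∀ n : ℕ, Fintype {x : α // rk x = n}]

private lemma dp_slice_finite (rk : α → ℕ) [∀ n : ℕ, Fintype {x : α // rk x = n}]
    (n : ℕ) : {x : α | rk x = n}.Finite := by
  have h : {x : α | rk x = n} = Set.range (fun y : {x : α // rk x = n} => (y : α)) := by
    ext x
    constructor
    · intro hx; exact ⟨⟨x, hx⟩, rfl⟩
    · rintro ⟨⟨y, hy⟩, rfl⟩; exact hy
  rw [h]; exact Set.finite_range _

private lemma dp_finU (hgrade : ∀ x y : α, x ⋖ y → rk y = rk x + 1) (x : α) :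
    {z : α | x ⋖ z}.Finite :=
  (dp_slice_finite rk (rk x + 1)).subset fun z hz => hgrade x z hz

private lemma dp_D_bot : {y : α | y ⋖ (⊥ : α)} = ∅ := by
  ext y
  simp only [Set.mem_setOf_eq, Set.mem_empty_iff_false, iff_false]
  exact fun h => absurd h.lt not_lt_bot

/-- Main counting lemma: for `x` with unique lower cover `p`, the set `B` of
"bad" upper covers of `x` (those covering something besides `x`) has
cardinality less than `|D(p)| + r`. -/
private lemma dp_bad_small
    (hgrade : ∀ x y : α, x ⋖ y → rk y = rk x + 1)
    (hD1 : ∀ x : α, {z : α | x ⋖ z}.ncard = {y : α | y ⋖ x}.ncard + r)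
    (hD2 : ∀ x y : α, x ≠ y →
      {z : α | z ⋖ x ∧ z ⋖ y}.ncard = {z : α | x ⋖ z ∧ y ⋖ z}.ncard)
    {x p : α} (hpx : p ⋖ x) (hux : ∀ q : α, q ⋖ x → q = p) :
    ∃ B : Set α, B ⊆ {z : α | x ⋖ z} ∧ B.ncard < {y : α | y ⋖ p}.ncard + r ∧
      ∀ z : α, x ⋖ z → z ∉ B → ∀ q : α, q ⋖ z → q = x := by
  classical
  set B : Set α := {z : α | x ⋖ z ∧ ∃ u, u ≠ x ∧ u ⋖ z} with hBdef
  have hBsub : B ⊆ {z : α | x ⋖ z} := fun z hz => hz.1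
  have hcl_le : ∀ u : α, {w : α | w ⋖ x ∧ w ⋖ u}.ncard ≤ 1 := by
    intro u
    have hsub : {w : α | w ⋖ x ∧ w ⋖ u} ⊆ {p} := by
      intro w hw
      simp only [Set.mem_singleton_iff]
      exact hux w hw.1
    calc {w : α | w ⋖ x ∧ w ⋖ u}.ncard ≤ ({p} : Set α).ncard :=
          Set.ncard_le_ncard hsub (Set.finite_singleton p)
      _ = 1 := Set.ncard_singleton p
  -- uniqueness of common upper covers
  have huniq : ∀ u : α, u ≠ x → ∀ z z' : α, x ⋖ z → u ⋖ z → x ⋖ z' → u ⋖ z' → z = z' := by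
    intro u hu z z' h1 h2 h3 h4
    have hxu : x ≠ u := fun h => hu h.symm
    have h2' := hD2 x u hxu
    have hle : {w : α | x ⋖ w ∧ u ⋖ w}.ncard ≤ 1 := h2' ▸ hcl_le u
    have hfin : {w : α | x ⋖ w ∧ u ⋖ w}.Finite :=
      (dp_finU hgrade x).subset fun w hw => hw.1
    exact (Set.ncard_le_one_iff hfin).mp hle ⟨h1, h2⟩ ⟨h3, h4⟩
  -- every bad z yields u with p ⋖ u, u ≠ x, u ⋖ z
  have key : ∀ z ∈ B, ∃ u : α, u ≠ x ∧ u ⋖ z ∧ p ⋖ u := by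
    rintro z ⟨hxz, u, hunx, huz⟩
    have hxu : x ≠ u := fun h => hunx h.symm
    have h2' := hD2 x u hxu
    have hupfin : {w : α | x ⋖ w ∧ u ⋖ w}.Finite :=
      (dp_finU hgrade x).subset fun w hw => hw.1
    have hpos : 0 < {w : α | x ⋖ w ∧ u ⋖ w}.ncard :=
      (Set.ncard_pos hupfin).mpr ⟨z, hxz, huz⟩
    have hlow : {w : α | w ⋖ x ∧ w ⋖ u}.Nonempty := by
      apply Set.nonempty_of_ncard_ne_zero
      rw [h2']
      omega
    obtain ⟨q, hq1, hq2⟩ := hlow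
    have : q = p := hux q hq1
    exact ⟨u, hunx, huz, this ▸ hq2⟩
  choose! f hf1 hf2 hf3 using key
  have hmaps : ∀ z ∈ B, f z ∈ {w : α | p ⋖ w} \ {x} := by
    intro z hz
    exact ⟨hf3 z hz, hf1 z hz⟩
  have hinj : Set.InjOn f B := by
    intro z hz z' hz' hff
    exact huniq (f z) (hf1 z hz) z z' (hBsub hz) (hf2 z hz) (hBsub hz')
      (hff ▸ hf2 z' hz')
  have hUpfin : {w : α | p ⋖ w}.Finite := dp_finU hgrade p
  have hBle : B.ncard ≤ ({w : α | p ⋖ w} \ {x}).ncard :=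
    Set.ncard_le_ncard_of_injOn f hmaps hinj (hUpfin.subset Set.diff_subset)
  have hlt : ({w : α | p ⋖ w} \ {x}).ncard < {w : α | p ⋖ w}.ncard :=
    Set.ncard_diff_singleton_lt_of_mem hpx hUpfin
  have hUp : {w : α | p ⋖ w}.ncard = {y : α | y ⋖ p}.ncard + r := hD1 p
  refine ⟨B, hBsub, by omega, ?_⟩
  intro z hxz hzB q hqz
  by_contra hqx
  exact hzB ⟨hxz, q, hqx, hqz⟩

end Aux

/-- Every `r`-differential poset contains a pair of infinite saturated chains
`t_0 ⋖ t_1 ⋖ ⋯` and `s_0 ⋖ s_1 ⋖ ⋯` with `rank(t_n) = rank(s_n) = n`, agreeing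
at the bottom (up to rank 1 if `r = 1`, rank 0 if `r > 1`), disagreeing above,
and with each `t_n`, `s_n` covering at most one element of the poset. -/
theorem exists_pair_of_chains [PartialOrder α] [OrderBot α]
    (rk : α → ℕ) (r : ℕ) [∀ n : ℕ, Fintype {x : α // rk x = n}]
    (hr : 1 ≤ r) (hbot : rk ⊥ = 0)
    (hgrade : ∀ x y : α, x ⋖ y → rk y = rk x + 1)
    (hdown : ∀ x : α, x ≠ ⊥ → ∃ y : α, y ⋖ x)
    (hD1 : ∀ x : α, {z : α | x ⋖ z}.ncard = {y : α | y ⋖ x}.ncard + r)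
    (hD2 : ∀ x y : α, x ≠ y →
      {z : α | z ⋖ x ∧ z ⋖ y}.ncard = {z : α | x ⋖ z ∧ y ⋖ z}.ncard)
    :
    ∃ t s : ℕ → α,
      (∀ n : ℕ, t n ⋖ t (n + 1)) ∧ (∀ n : ℕ, s n ⋖ s (n + 1)) ∧
      (∀ n : ℕ, rk (t n) = n) ∧ (∀ n : ℕ, rk (s n) = n) ∧
      (r = 1 → t 0 = s 0 ∧ t 1 = s 1 ∧ ∀ n : ℕ, 2 ≤ n → t n ≠ s n) ∧
      (1 < r → t 0 = s 0 ∧ ∀ n : ℕ, 1 ≤ n → t n ≠ s n) ∧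
      (∀ n : ℕ, {z : α | z ⋖ t n}.ncard ≤ 1) ∧
      (∀ n : ℕ, {z : α | z ⋖ s n}.ncard ≤ 1) := by
  classical
  have rank0 : ∀ x : α, rk x = 0 → x = ⊥ := by
    intro x hx
    by_contra h
    obtain ⟨y, hy⟩ := hdown x h
    have := hgrade y x hy
    omega
  have hDbotn : {y : α | y ⋖ (⊥ : α)}.ncard = 0 := by
    rw [dp_D_bot]; exact Set.ncard_empty α
  have hUbot : {z : α | (⊥ : α) ⋖ z}.ncard = r := by
    rw [hD1 ⊥, hDbotn]; omega
  have hUbotfin : {z : α | (⊥ : α) ⋖ z}.Finite := dp_finU hgrade ⊥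
  -- atoms cover only ⊥
  have atom_uniq : ∀ z : α, (⊥ : α) ⋖ z → ∀ q : α, q ⋖ z → q = ⊥ := by
    intro z hz q hq
    have h1 := hgrade ⊥ z hz
    have h2 := hgrade q z hq
    exact rank0 q (by omega)
  -- the invariant
  set Inv : α → Prop := fun x =>
    ∃ p : α, p ⋖ x ∧ (∀ q : α, q ⋖ x → q = p) ∧ {y : α | y ⋖ p}.ncard ≤ 1 with hInvdef
  have hsingle : ∀ x p : α, (∀ q : α, q ⋖ x → q = p) → {y : α | y ⋖ x}.ncard ≤ 1 := by
    intro x p hux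
    have hsub : {y : α | y ⋖ x} ⊆ {p} := fun y hy => by
      simp only [Set.mem_singleton_iff]; exact hux y hy
    calc {y : α | y ⋖ x}.ncard ≤ ({p} : Set α).ncard :=
          Set.ncard_le_ncard hsub (Set.finite_singleton p)
      _ = 1 := Set.ncard_singleton p
  have step : ∀ x : α, Inv x → ∃ z : α, x ⋖ z ∧ Inv z := by
    rintro x ⟨p, hpx, hux, hp⟩
    obtain ⟨B, hBsub, hBlt, hgood⟩ := dp_bad_small hgrade hD1 hD2 hpx hux
    have hDx : {y : α | y ⋖ x} = {p} := by
      apply Set.eq_singleton_iff_unique_mem.mpr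
      exact ⟨hpx, hux⟩
    have hUx : {z : α | x ⋖ z}.ncard = 1 + r := by
      rw [hD1 x, hDx, Set.ncard_singleton]
    have hBfin : B.Finite := (dp_finU hgrade x).subset hBsub
    have hnsub : ¬ {z : α | x ⋖ z} ⊆ B := by
      intro hss
      have := Set.ncard_le_ncard hss hBfin
      omega
    obtain ⟨z, hz, hzB⟩ := Set.not_subset.mp hnsub
    refine ⟨z, hz, x, hz, hgood z hz hzB, hsingle x p hux⟩
  -- chain builder
  have chain : ∀ x₀ : α, Inv x₀ →
      ∃ c : ℕ → α, c 0 = x₀ ∧ (∀ n, c n ⋖ c (n + 1)) ∧ ∀ n, Inv (c n) := by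
    intro x₀ h₀
    choose! nxt hnxt1 hnxt2 using step
    refine ⟨fun n => Nat.rec x₀ (fun _ x => nxt x) n, rfl, ?_, ?_⟩
    · intro n
      exact hnxt1 _ (Nat.rec h₀ (fun k ih => hnxt2 _ ih) n)
    · intro n
      exact Nat.rec h₀ (fun k ih => hnxt2 _ ih) n
  -- distinctness propagation
  have prop_ne : ∀ c d : ℕ → α, (∀ n, c n ⋖ c (n + 1)) → (∀ n, d n ⋖ d (n + 1)) →
      (∀ n, Inv (c n)) → c 0 ≠ d 0 → ∀ n, c n ≠ d n := by
    intro c d hc hd hic h0 n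
    induction n with
    | zero => exact h0
    | succ k ih =>
      intro heq
      obtain ⟨p, hp, hup, -⟩ := hic (k + 1)
      have h1 : c k = p := hup (c k) (hc k)
      have h2 : d k = p := hup (d k) (heq ▸ hd k)
      exact ih (h1.trans h2.symm)
  rcases eq_or_lt_of_le hr with hr1 | hr2
  · -- r = 1 case
    have hr1 : r = 1 := hr1.symm
    -- unique atom a
    have hUbot1 : {z : α | (⊥ : α) ⋖ z}.ncard = 1 := by rw [hUbot, hr1]
    obtain ⟨a, ha⟩ := Set.ncard_eq_one.mp hUbot1
    have hba : (⊥ : α) ⋖ a := by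
      have : a ∈ {z : α | (⊥ : α) ⋖ z} := ha ▸ Set.mem_singleton a
      exact this
    have hau : ∀ q : α, q ⋖ a → q = ⊥ := atom_uniq a hba
    -- all upper covers of a are good
    obtain ⟨B, hBsub, hBlt, hgood⟩ := dp_bad_small hgrade hD1 hD2 hba hau
    have hBfin : B.Finite := (dp_finU hgrade a).subset hBsub
    have hB0 : B.ncard = 0 := by rw [hDbotn] at hBlt; omega
    have hBempty : B = ∅ := (Set.ncard_eq_zero hBfin).mp hB0
    have hgood' : ∀ z : α, a ⋖ z → ∀ q : α, q ⋖ z → q = a := by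
      intro z hz
      exact hgood z hz (by rw [hBempty]; exact Set.notMem_empty z)
    have hDa : {y : α | y ⋖ a} = {(⊥ : α)} :=
      Set.eq_singleton_iff_unique_mem.mpr ⟨hba, hau⟩
    have hUa2 : 1 < {z : α | a ⋖ z}.ncard := by
      rw [hD1 a, hDa, Set.ncard_singleton, hr1]
      omega
    obtain ⟨x₀, hx₀, y₀, hy₀, hxy⟩ := (Set.one_lt_ncard (dp_finU hgrade a)).mp hUa2
    have hIa : ∀ z : α, a ⋖ z → Inv z := by
      intro z hz
      exact ⟨a, hz, hgood' z hz, hsingle a ⊥ hau⟩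
    obtain ⟨c, hc0, hcc, hci⟩ := chain x₀ (hIa x₀ hx₀)
    obtain ⟨d, hd0, hdc, hdi⟩ := chain y₀ (hIa y₀ hy₀)
    have hcd : ∀ n, c n ≠ d n :=
      prop_ne c d hcc hdc hci (by rw [hc0, hd0]; exact hxy)
    refine ⟨fun n => match n with | 0 => ⊥ | 1 => a | (j+2) => c j,
            fun n => match n with | 0 => ⊥ | 1 => a | (j+2) => d j,
            ?_, ?_, ?_, ?_, ?_, ?_, ?_, ?_⟩
    · rintro (_ | _ | j)
      · exact hba
      · show a ⋖ c 0
        rw [hc0]; exact hx₀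
      · exact hcc j
    · rintro (_ | _ | j)
      · exact hba
      · show a ⋖ d 0
        rw [hd0]; exact hy₀
      · exact hdc j
    · have hrka : rk a = 1 := by rw [hgrade ⊥ a hba, hbot]
      have hrkc : ∀ j, rk (c j) = j + 2 := by
        intro j
        induction j with
        | zero => rw [hc0, hgrade a x₀ hx₀, hrka]
        | succ k ih => rw [hgrade _ _ (hcc k), ih]
      rintro (_ | _ | j)
      · exact hbot
      · exact hrka
      · exact hrkc j
    · have hrka : rk a = 1 := by rw [hgrade ⊥ a hba, hbot]
      have hrkd : ∀ j, rk (d j) = j + 2 := by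
        intro j
        induction j with
        | zero => rw [hd0, hgrade a y₀ hy₀, hrka]
        | succ k ih => rw [hgrade _ _ (hdc k), ih]
      rintro (_ | _ | j)
      · exact hbot
      · exact hrka
      · exact hrkd j
    · intro _
      refine ⟨rfl, rfl, ?_⟩
      rintro (_ | _ | j) hn
      · omega
      · omega
      · exact hcd j
    · intro h; omega
    · rintro (_ | _ | j)
      · rw [dp_D_bot]; simp
      · exact hsingle a ⊥ hau
      · obtain ⟨p, -, hup, -⟩ := hci j
        exact hsingle (c j) p hup
    · rintro (_ | _ | j)
      · rw [dp_D_bot]; simp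
      · exact hsingle a ⊥ hau
      · obtain ⟨p, -, hup, -⟩ := hdi j
        exact hsingle (d j) p hup
  · -- r > 1 case
    have hU2 : 1 < {z : α | (⊥ : α) ⋖ z}.ncard := by omega
    obtain ⟨x₀, hx₀, y₀, hy₀, hxy⟩ := (Set.one_lt_ncard hUbotfin).mp hU2
    have hIatom : ∀ z : α, (⊥ : α) ⋖ z → Inv z := by
      intro z hz
      refine ⟨⊥, hz, atom_uniq z hz, ?_⟩
      rw [hDbotn]; omega
    obtain ⟨c, hc0, hcc, hci⟩ := chain x₀ (hIatom x₀ hx₀)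
    obtain ⟨d, hd0, hdc, hdi⟩ := chain y₀ (hIatom y₀ hy₀)
    have hcd : ∀ n, c n ≠ d n :=
      prop_ne c d hcc hdc hci (by rw [hc0, hd0]; exact hxy)
    refine ⟨fun n => match n with | 0 => ⊥ | (j+1) => c j,
            fun n => match n with | 0 => ⊥ | (j+1) => d j,
            ?_, ?_, ?_, ?_, ?_, ?_, ?_, ?_⟩
    · rintro (_ | j)
      · show (⊥ : α) ⋖ c 0
        rw [hc0]; exact hx₀
      · exact hcc j
    · rintro (_ | j)
      · show (⊥ : α) ⋖ d 0
        rw [hd0]; exact hy₀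
      · exact hdc j
    · have hrkc : ∀ j, rk (c j) = j + 1 := by
        intro j
        induction j with
        | zero => rw [hc0, hgrade ⊥ x₀ hx₀, hbot]
        | succ k ih => rw [hgrade _ _ (hcc k), ih]
      rintro (_ | j)
      · exact hbot
      · exact hrkc j
    · have hrkd : ∀ j, rk (d j) = j + 1 := by
        intro j
        induction j with
        | zero => rw [hd0, hgrade ⊥ y₀ hy₀, hbot]
        | succ k ih => rw [hgrade _ _ (hdc k), ih]
      rintro (_ | j)
      · exact hbot
      · exact hrkd j
    · intro h; omega
    · intro _
      refine ⟨rfl, ?_⟩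
      rintro (_ | j) hn
      · omega
      · exact hcd j
    · rintro (_ | j)
      · rw [dp_D_bot]; simp
      · obtain ⟨p, -, hup, -⟩ := hci j
        exact hsingle (c j) p hup
    · rintro (_ | j)
      · rw [dp_D_bot]; simp
      · obtain ⟨p, -, hup, -⟩ := hdi j
        exact hsingle (d j) p hup
end

section
/- Let P be an r-differential poset, k a positive integer, and n ≥ 0. Then the matrix DU_n + kI is invertible over ℚ, and the column of its inverse indexed by t_n equals the coordinate vector of v_{n,k} := Σ_{j=0}^{n} (−1)^j U^j t_{n−j} / (j+1)!_{r,k}; that is, for every x ∈ P_n, the (x, t_n) entry of (DU_n + kI)^{−1} equals the coefficient of x in v_{n,k}. -/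
open Matrix

variable {α : Type*}

set_option linter.unusedSectionVars false


lemma rankCast_self [PartialOrder α] (rk : α → ℕ) (m : ℕ) (v : {x : α // rk x = m} → ℚ) :
    rankCast rk m m v = v := funext fun x => dif_pos x.2

open Classical in
lemma ncard_eq_sum [PartialOrder α] (rk : α → ℕ) [∀ n : ℕ, Fintype {x : α // rk x = n}]
    (m : ℕ) (P : α → Prop) (hP : ∀ z, P z → rk z = m) :
    (({z : α | P z}).ncard : ℚ) = ∑ z : {z : α // rk z = m}, if P z.1 then 1 else 0 := by
  rw [Finset.sum_boole]
  congr 1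
  rw [show {z : α | P z} = Subtype.val '' {z : {z : α // rk z = m} | P z.1} from ?_,
    Set.ncard_image_of_injective _ Subtype.val_injective, Set.ncard_eq_toFinset_card']
  · congr 1; ext z; simp
  · ext z
    exact ⟨fun hz => ⟨⟨z, hP z hz⟩, hz, rfl⟩, by rintro ⟨w, hw, rfl⟩; exact hw⟩

section DU
variable [PartialOrder α] [OrderBot α] (rk : α → ℕ) (r : ℕ)
  [∀ n : ℕ, Fintype {x : α // rk x = n}]
  (hgrade : ∀ x y : α, x ⋖ y → rk y = rk x + 1)

open Classical in
include hgrade in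
lemma duMat_succ_eq
    (hD1 : ∀ x : α, {z : α | x ⋖ z}.ncard = {y : α | y ⋖ x}.ncard + r)
    (hD2 : ∀ x y : α, x ≠ y →
      {z : α | z ⋖ x ∧ z ⋖ y}.ncard = {z : α | x ⋖ z ∧ y ⋖ z}.ncard)
    (m : ℕ) :
    duMat rk (m+1) = upMat rk m * (upMat rk m)ᵀ + (r : ℚ) • 1 := by
  ext x y
  have hL : duMat rk (m+1) x y = (({z : α | x.1 ⋖ z ∧ y.1 ⋖ z}).ncard : ℚ) := by
    rw [ncard_eq_sum rk (m+2) _ (fun z hz => by rw [hgrade _ _ hz.1, x.2])]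
    simp only [duMat, Matrix.mul_apply, Matrix.transpose_apply, upMat, Matrix.of_apply,
      ite_mul, one_mul, zero_mul, ← ite_and]
    exact Finset.sum_congr rfl fun z _ => by congr
  have hR : (upMat rk m * (upMat rk m)ᵀ) x y
      = (({z : α | z ⋖ x.1 ∧ z ⋖ y.1}).ncard : ℚ) := by
    rw [ncard_eq_sum rk m _ (fun z hz => by have := hgrade _ _ hz.1; omega)]
    simp only [upMat, Matrix.mul_apply, Matrix.transpose_apply, Matrix.of_apply,
      ite_mul, one_mul, zero_mul, ← ite_and]
    exact Finset.sum_congr rfl fun z _ => by congr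
  by_cases hxy : x = y
  · subst hxy
    simp only [hL, Matrix.add_apply, hR, Matrix.smul_apply, Matrix.one_apply_eq,
      smul_eq_mul, mul_one, and_self]
    have := hD1 x.1
    exact_mod_cast congrArg (Nat.cast : ℕ → ℚ) this
  · have hne : x.1 ≠ y.1 := fun h => hxy (Subtype.ext h)
    simp only [hL, Matrix.add_apply, hR, Matrix.smul_apply, Matrix.one_apply_ne hxy,
      smul_eq_mul, mul_zero, add_zero]
    exact_mod_cast congrArg (Nat.cast : ℕ → ℚ) (hD2 x.1 y.1 hne).symm

include hgrade in
lemma rank_zero_eq_bot (hdown : ∀ x : α, x ≠ ⊥ → ∃ y : α, y ⋖ x)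
    (x : α) (hx : rk x = 0) : x = ⊥ := by
  by_contra h
  obtain ⟨y, hy⟩ := hdown x h
  have := hgrade y x hy
  omega

open Classical in
include hgrade in
lemma duMat_zero_eq
    (hdown : ∀ x : α, x ≠ ⊥ → ∃ y : α, y ⋖ x)
    (hD1 : ∀ x : α, {z : α | x ⋖ z}.ncard = {y : α | y ⋖ x}.ncard + r) :
    duMat rk 0 = (r : ℚ) • 1 := by
  ext x y
  have hx : x = y := Subtype.ext ((rank_zero_eq_bot rk hgrade hdown x.1 x.2).trans
    (rank_zero_eq_bot rk hgrade hdown y.1 y.2).symm)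
  subst hx
  have hL : duMat rk 0 x x = (({z : α | x.1 ⋖ z}).ncard : ℚ) := by
    rw [ncard_eq_sum rk 1 _ (fun z hz => by rw [hgrade _ _ hz, x.2])]
    simp only [duMat, Matrix.mul_apply, Matrix.transpose_apply, upMat, Matrix.of_apply,
      ite_mul, one_mul, zero_mul, ← ite_and, and_self]
  have hempty : {y : α | y ⋖ x.1} = ∅ := by
    ext z
    simp only [Set.mem_setOf_eq, Set.mem_empty_iff_false, iff_false]
    intro hz
    have := hgrade _ _ hz
    omega
  have := hD1 x.1
  rw [hempty, Set.ncard_empty, zero_add] at this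
  simp [hL, this, Matrix.smul_apply, Matrix.one_apply_eq]
end DU

section Chain
variable [PartialOrder α] (rk : α → ℕ) [∀ n : ℕ, Fintype {x : α // rk x = n}]
  (hgrade : ∀ x y : α, x ⋖ y → rk y = rk x + 1)
  (t : ℕ → α)

set_option linter.unusedSectionVars false

include hgrade in
lemma cov_t_iff (htchain : ∀ m : ℕ, t m ⋖ t (m + 1))
    (hrkt : ∀ m : ℕ, rk (t m) = m)
    (hcovt : ∀ m : ℕ, {z : α | z ⋖ t m}.ncard ≤ 1)
    (m : ℕ) (y : α) : y ⋖ t (m+1) ↔ y = t m := by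
  constructor
  · intro hy
    by_contra hne
    have hsub : {z : α | z ⋖ t (m+1)} ⊆ {z : α | rk z = m} := by
      intro z hz
      have h1 := hgrade _ _ hz
      have h2 := hrkt (m+1)
      simp only [Set.mem_setOf_eq]
      omega
    have hfin : ({z : α | z ⋖ t (m+1)}).Finite := by
      apply Set.Finite.subset (Set.finite_range (Subtype.val : {x : α // rk x = m} → α))
      intro z hz
      exact ⟨⟨z, hsub hz⟩, rfl⟩
    have hpair : ({y, t m} : Set α) ⊆ {z : α | z ⋖ t (m+1)} := by
      rintro z (rfl | rfl)
      · exact hy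
      · exact htchain m
    have h2 := Set.ncard_le_ncard hpair hfin
    rw [Set.ncard_pair hne] at h2
    have := hcovt (m+1)
    omega
  · rintro rfl; exact htchain m

open Classical in
include hgrade in
lemma down_t (htchain : ∀ m : ℕ, t m ⋖ t (m + 1))
    (hrkt : ∀ m : ℕ, rk (t m) = m)
    (hcovt : ∀ m : ℕ, {z : α | z ⋖ t m}.ncard ≤ 1)
    (m : ℕ) :
    (upMat rk m)ᵀ.mulVec (basisVec rk (m+1) (t (m+1))) = basisVec rk m (t m) := by
  funext y
  simp only [Matrix.mulVec, dotProduct, Matrix.transpose_apply, upMat,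
    Matrix.of_apply, basisVec, mul_ite, mul_one, mul_zero, ite_mul, one_mul, zero_mul,
    ← ite_and]
  rw [Finset.sum_congr rfl (g := fun z : {x : α // rk x = m+1} =>
      if z = ⟨t (m+1), hrkt (m+1)⟩ then (if y.1 ⋖ z.1 then (1:ℚ) else 0) else 0)
      (fun z _ => by
        by_cases h : z.1 = t (m+1)
        · have hz : z = (⟨t (m+1), hrkt (m+1)⟩ : {x : α // rk x = m+1}) := Subtype.ext h
          simp [h, hz]
        · have hz : z ≠ (⟨t (m+1), hrkt (m+1)⟩ : {x : α // rk x = m+1}) :=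
            fun hh => h (congrArg Subtype.val hh)
          simp [h, hz])]
  simp only [Finset.sum_ite_eq', Finset.mem_univ, if_true]
  by_cases hy : y.1 = t m
  · simp only [hy, if_true]
    rw [if_pos (htchain m)]
  · simp only [hy, if_false]
    rw [if_neg (fun hh => hy ((cov_t_iff rk hgrade t htchain hrkt hcovt m y.1).1 hh))]
end Chain

lemma genFac_succ' (r k j : ℕ) : genFac r k (j+1) = genFac r (k+r) j * (r * 1 + k) := by
  unfold genFac
  rw [Finset.prod_range_succ']
  congr 1
  exact Finset.prod_congr rfl fun i _ => by ring

lemma genFac_pos (r k ℓ : ℕ) (hr : 1 ≤ r) : 0 < genFac r k ℓ :=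
  Finset.prod_pos fun i _ => by positivity

noncomputable def termVec [PartialOrder α] (rk : α → ℕ)
    [∀ n : ℕ, Fintype {x : α // rk x = n}] (t : ℕ → α) (a j n : ℕ) :
    {x : α // rk x = n} → ℚ :=
  rankCast rk (a + j) n (upIter rk a j (basisVec rk a (t a)))

section TermVec
variable [PartialOrder α] (rk : α → ℕ) [∀ n : ℕ, Fintype {x : α // rk x = n}] (t : ℕ → α)

lemma vVec_eq_sum (r k n : ℕ) :
    vVec rk t r k n = ∑ j ∈ Finset.range (n + 1),
      ((-1 : ℚ) ^ j / (genFac r k (j + 1) : ℚ)) • termVec rk t (n - j) j n := rfl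

lemma termVec_zero (a : ℕ) : termVec rk t a 0 a = basisVec rk a (t a) :=
  rankCast_self rk a _

lemma termVec_succ (a j n : ℕ) (h : a + j = n) :
    termVec rk t a (j+1) (n+1) = (upMat rk n).mulVec (termVec rk t a j n) := by
  subst h
  show rankCast rk ((a+j)+1) ((a+j)+1) _ = (upMat rk (a+j)).mulVec (rankCast rk (a+j) (a+j) _)
  rw [rankCast_self, rankCast_self]
  rfl
end TermVec

section Main
variable [PartialOrder α] [OrderBot α] (rk : α → ℕ) (r : ℕ)
  [∀ n : ℕ, Fintype {x : α // rk x = n}] (t : ℕ → α)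

set_option linter.unusedSectionVars false

lemma vVec_succ (hr : 1 ≤ r) (n k : ℕ) (hk : 0 < k) :
    vVec rk t r k (n+1) = ((r : ℚ) + k)⁻¹ • basisVec rk (n+1) (t (n+1))
      - ((r : ℚ) + k)⁻¹ • (upMat rk n).mulVec (vVec rk t r (k+r) n) := by
  have hrQ : (0:ℚ) < r := by exact_mod_cast hr
  have hkQ : (0:ℚ) < k := by exact_mod_cast hk
  have hne2 : ((r:ℚ) + k) ≠ 0 := by linarith
  have hg1 : (genFac r k 1 : ℚ) = (r:ℚ) + k := by
    exact_mod_cast congrArg (Nat.cast : ℕ → ℚ) (by simp [genFac] : genFac r k 1 = r + k)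
  rw [vVec_eq_sum, Finset.sum_range_succ']
  have h0 : ((-1:ℚ)^0 / (genFac r k (0+1) : ℚ)) • termVec rk t (n+1-0) 0 (n+1)
      = ((r:ℚ)+k)⁻¹ • basisVec rk (n+1) (t (n+1)) := by
    have he : termVec rk t (n+1-0) 0 (n+1) = basisVec rk (n+1) (t (n+1)) :=
      termVec_zero rk t (n+1)
    rw [he, pow_zero, one_div, hg1]
  rw [h0]
  have hsum : ∀ j ∈ Finset.range (n+1),
      ((-1:ℚ)^(j+1) / (genFac r k (j+1+1) : ℚ)) • termVec rk t (n+1-(j+1)) (j+1) (n+1)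
      = (-(((r:ℚ)+k)⁻¹)) • (((-1:ℚ)^j / (genFac r (k+r) (j+1) : ℚ)) •
          (upMat rk n).mulVec (termVec rk t (n-j) j n)) := by
    intro j hj
    have hj' : j ≤ n := Nat.lt_succ_iff.mp (Finset.mem_range.mp hj)
    have hidx : n+1-(j+1) = n-j := by omega
    have ht : termVec rk t (n+1-(j+1)) (j+1) (n+1)
        = (upMat rk n).mulVec (termVec rk t (n-j) j n) := by
      rw [hidx]
      exact termVec_succ rk t (n-j) j n (Nat.sub_add_cancel hj')
    rw [ht, smul_smul]
    congr 1
    have hg : (genFac r k (j+2) : ℚ) = (genFac r (k+r) (j+1) : ℚ) * ((r:ℚ) + k) := by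
      rw [genFac_succ' r k (j+1)]; push_cast; ring
    have hne1 : (genFac r (k+r) (j+1) : ℚ) ≠ 0 := by
      exact_mod_cast (genFac_pos r (k+r) (j+1) hr).ne'
    rw [show j+1+1 = j+2 from rfl, hg]
    field_simp
    ring
  rw [Finset.sum_congr rfl hsum, ← Finset.smul_sum]
  have hU : ∑ j ∈ Finset.range (n+1), (((-1:ℚ)^j / (genFac r (k+r) (j+1) : ℚ)) •
        (upMat rk n).mulVec (termVec rk t (n-j) j n))
      = (upMat rk n).mulVec (vVec rk t r (k+r) n) := by
    rw [vVec_eq_sum]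
    rw [show (upMat rk n).mulVec (∑ j ∈ Finset.range (n+1),
        ((-1:ℚ)^j / (genFac r (k+r) (j+1) : ℚ)) • termVec rk t (n-j) j n)
      = ∑ j ∈ Finset.range (n+1), (upMat rk n).mulVec
        (((-1:ℚ)^j / (genFac r (k+r) (j+1) : ℚ)) • termVec rk t (n-j) j n) from
      map_sum ((upMat rk n).mulVecLin) _ _]
    exact Finset.sum_congr rfl fun j _ => by rw [Matrix.mulVec_smul]
  rw [hU, neg_smul]
  abel

open Classical in
lemma main_mulVec
    (hr : 1 ≤ r)
    (hgrade : ∀ x y : α, x ⋖ y → rk y = rk x + 1)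
    (hdown : ∀ x : α, x ≠ ⊥ → ∃ y : α, y ⋖ x)
    (hD1 : ∀ x : α, {z : α | x ⋖ z}.ncard = {y : α | y ⋖ x}.ncard + r)
    (hD2 : ∀ x y : α, x ≠ y →
      {z : α | z ⋖ x ∧ z ⋖ y}.ncard = {z : α | x ⋖ z ∧ y ⋖ z}.ncard)
    (htchain : ∀ m : ℕ, t m ⋖ t (m + 1))
    (hrkt : ∀ m : ℕ, rk (t m) = m)
    (hcovt : ∀ m : ℕ, {z : α | z ⋖ t m}.ncard ≤ 1) :
    ∀ n k : ℕ, 0 < k →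
      (duMat rk n + (k:ℚ) • 1).mulVec (vVec rk t r k n) = basisVec rk n (t n) := by
  intro n
  induction n with
  | zero =>
    intro k hk
    have hrQ : (0:ℚ) < r := by exact_mod_cast hr
    have hkQ : (0:ℚ) < k := by exact_mod_cast hk
    have hne2 : ((r:ℚ) + k) ≠ 0 := by linarith
    have hg1 : (genFac r k 1 : ℚ) = (r:ℚ) + k := by
      exact_mod_cast congrArg (Nat.cast : ℕ → ℚ) (by simp [genFac] : genFac r k 1 = r + k)
    have hv : vVec rk t r k 0
        = ((-1:ℚ)^0 / (genFac r k 1 : ℚ)) • basisVec rk 0 (t 0) := by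
      rw [vVec_eq_sum, Finset.sum_range_one]
      congr 1
      exact termVec_zero rk t 0
    rw [hv, duMat_zero_eq rk r hgrade hdown hD1, ← add_smul, Matrix.mulVec_smul,
      Matrix.smul_mulVec, Matrix.one_mulVec, smul_smul, pow_zero, one_div, hg1,
      inv_mul_cancel₀ hne2, one_smul]
  | succ n ih =>
    intro k hk
    have hrQ : (0:ℚ) < r := by exact_mod_cast hr
    have hkQ : (0:ℚ) < k := by exact_mod_cast hk
    have hne2 : ((r:ℚ) + k) ≠ 0 := by linarith
    rw [vVec_succ rk r t hr n k hk, Matrix.mulVec_sub, Matrix.mulVec_smul,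
      Matrix.mulVec_smul]
    have hA_e : (duMat rk (n+1) + (k:ℚ) • 1).mulVec (basisVec rk (n+1) (t (n+1)))
        = (upMat rk n).mulVec (basisVec rk n (t n))
          + ((r:ℚ)+k) • basisVec rk (n+1) (t (n+1)) := by
      rw [Matrix.add_mulVec, duMat_succ_eq rk r hgrade hD1 hD2 n, Matrix.add_mulVec,
        Matrix.smul_mulVec, Matrix.one_mulVec, Matrix.smul_mulVec,
        Matrix.one_mulVec, ← Matrix.mulVec_mulVec, down_t rk hgrade t htchain hrkt hcovt n,
        add_smul]
      abel
    have hA_U : (duMat rk (n+1) + (k:ℚ) • 1).mulVec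
          ((upMat rk n).mulVec (vVec rk t r (k+r) n))
        = (upMat rk n).mulVec ((duMat rk n + ((k+r : ℕ):ℚ) • 1).mulVec
            (vVec rk t r (k+r) n)) := by
      set w := vVec rk t r (k+r) n
      rw [Matrix.add_mulVec, duMat_succ_eq rk r hgrade hD1 hD2 n, Matrix.add_mulVec,
        Matrix.smul_mulVec, Matrix.one_mulVec, Matrix.smul_mulVec,
        Matrix.one_mulVec, ← Matrix.mulVec_mulVec, Matrix.mulVec_mulVec w (upMat rk n)ᵀ,
        Matrix.add_mulVec, Matrix.mulVec_add, Matrix.smul_mulVec,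
        Matrix.one_mulVec, Matrix.mulVec_smul]
      show _ = (upMat rk n).mulVec ((duMat rk n).mulVec w) + ((k+r : ℕ):ℚ) • (upMat rk n).mulVec w
      rw [duMat]
      push_cast
      module
    rw [hA_e, hA_U, ih (k+r) (by omega)]
    rw [smul_add, smul_smul, inv_mul_cancel₀ hne2, one_smul]
    abel
end Main

lemma dot_self_nonneg {ι : Type*} [Fintype ι] (v : ι → ℚ) : 0 ≤ v ⬝ᵥ v :=
  Finset.sum_nonneg fun i _ => mul_self_nonneg (v i)

open Classical in
theorem du_add_k_invertible_and_first_column' [PartialOrder α] [OrderBot α]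
    (rk : α → ℕ) (r : ℕ) [∀ n : ℕ, Fintype {x : α // rk x = n}]
    (hr : 1 ≤ r) (hbot : rk ⊥ = 0)
    (hgrade : ∀ x y : α, x ⋖ y → rk y = rk x + 1)
    (hdown : ∀ x : α, x ≠ ⊥ → ∃ y : α, y ⋖ x)
    (hD1 : ∀ x : α, {z : α | x ⋖ z}.ncard = {y : α | y ⋖ x}.ncard + r)
    (hD2 : ∀ x y : α, x ≠ y →
      {z : α | z ⋖ x ∧ z ⋖ y}.ncard = {z : α | x ⋖ z ∧ y ⋖ z}.ncard)
    (t : ℕ → α) (htchain : ∀ m : ℕ, t m ⋖ t (m + 1))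
    (hrkt : ∀ m : ℕ, rk (t m) = m)
    (hcovt : ∀ m : ℕ, {z : α | z ⋖ t m}.ncard ≤ 1)
    (k : ℕ) (hk : 0 < k) (n : ℕ) :
    IsUnit (duMat rk n + (k : ℚ) • 1) ∧
      ∀ x : {x : α // rk x = n},
        (duMat rk n + (k : ℚ) • 1)⁻¹ x ⟨t n, hrkt n⟩ = vVec rk t r k n x := by
  set A := duMat rk n + (k:ℚ) • 1 with hA
  have hmain := main_mulVec rk r t hr hgrade hdown hD1 hD2 htchain hrkt hcovt n k hk
  have hkQ : (0:ℚ) < k := by exact_mod_cast hk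
  have hker : ∀ v : {x : α // rk x = n} → ℚ, A.mulVec v = 0 → v = 0 := by
    intro v hv
    have h0 : v ⬝ᵥ A.mulVec v = 0 := by rw [hv, dotProduct_zero]
    have hexp : v ⬝ᵥ A.mulVec v
        = (upMat rk n).mulVec v ⬝ᵥ (upMat rk n).mulVec v + (k:ℚ) * (v ⬝ᵥ v) := by
      rw [hA, Matrix.add_mulVec, dotProduct_add, Matrix.smul_mulVec,
        Matrix.one_mulVec]
      congr 1
      · rw [duMat, ← Matrix.mulVec_mulVec, Matrix.dotProduct_mulVec,
          Matrix.vecMul_transpose]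
      · rw [dotProduct_smul, smul_eq_mul]
    rw [hexp] at h0
    have h1 : 0 ≤ (upMat rk n).mulVec v ⬝ᵥ (upMat rk n).mulVec v := dot_self_nonneg _
    have h2 : 0 ≤ v ⬝ᵥ v := dot_self_nonneg _
    have h3 : v ⬝ᵥ v = 0 := by nlinarith
    exact dotProduct_self_eq_zero.mp h3
  have hinj : Function.Injective A.mulVec := by
    intro u w h
    have h0 : A.mulVec (u - w) = 0 := by rw [Matrix.mulVec_sub, h, sub_self]
    exact sub_eq_zero.mp (hker _ h0)
  have hUnit : IsUnit A := Matrix.mulVec_injective_iff_isUnit.mp hinj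
  refine ⟨hUnit, fun x => ?_⟩
  have hdet : IsUnit A.det := (Matrix.isUnit_iff_isUnit_det A).mp hUnit
  have hinvA : A⁻¹ * A = 1 := Matrix.nonsing_inv_mul A hdet
  have h1 : A⁻¹.mulVec (basisVec rk n (t n)) = vVec rk t r k n := by
    rw [← hmain, Matrix.mulVec_mulVec, hinvA, Matrix.one_mulVec]
  have h2 : A⁻¹.mulVec (basisVec rk n (t n)) x = A⁻¹ x ⟨t n, hrkt n⟩ := by
    simp only [Matrix.mulVec, dotProduct, basisVec, mul_ite, mul_one, mul_zero]
    rw [Finset.sum_congr rfl (g := fun y : {x : α // rk x = n} =>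
        if y = ⟨t n, hrkt n⟩ then A⁻¹ x y else 0) (fun y _ => by
      by_cases h : y.1 = t n
      · have hy : y = (⟨t n, hrkt n⟩ : {x : α // rk x = n}) := Subtype.ext h
        simp [h, hy]
      · have hy : y ≠ (⟨t n, hrkt n⟩ : {x : α // rk x = n}) :=
          fun hh => h (congrArg Subtype.val hh)
        simp [h, hy])]
    simp [Finset.sum_ite_eq']
  rw [← h2, h1]


open Classical in
/-- `DU_n + kI` is invertible over `ℚ`, and the column of its inverse indexed by
`t_n` is the coordinate vector of `v_{n,k}`. -/
theorem du_add_k_invertible_and_first_column [PartialOrder α] [OrderBot α]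
    (rk : α → ℕ) (r : ℕ) [∀ n : ℕ, Fintype {x : α // rk x = n}]
    (hr : 1 ≤ r) (hbot : rk ⊥ = 0)
    (hgrade : ∀ x y : α, x ⋖ y → rk y = rk x + 1)
    (hdown : ∀ x : α, x ≠ ⊥ → ∃ y : α, y ⋖ x)
    (hD1 : ∀ x : α, {z : α | x ⋖ z}.ncard = {y : α | y ⋖ x}.ncard + r)
    (hD2 : ∀ x y : α, x ≠ y →
      {z : α | z ⋖ x ∧ z ⋖ y}.ncard = {z : α | x ⋖ z ∧ y ⋖ z}.ncard)
    (t : ℕ → α) (htchain : ∀ m : ℕ, t m ⋖ t (m + 1))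
    (hrkt : ∀ m : ℕ, rk (t m) = m)
    (hcovt : ∀ m : ℕ, {z : α | z ⋖ t m}.ncard ≤ 1)
    (k : ℕ) (hk : 0 < k) (n : ℕ) :
    IsUnit (duMat rk n + (k : ℚ) • 1) ∧
      ∀ x : {x : α // rk x = n},
        (duMat rk n + (k : ℚ) • 1)⁻¹ x ⟨t n, hrkt n⟩ = vVec rk t r k n x :=
  du_add_k_invertible_and_first_column' rk r hr hbot hgrade hdown hD1 hD2 t
    htchain hrkt hcovt k hk n
end

section
/- Let P be an r-differential poset. Then its rank sizes strictly increase from rank 1 onward: p_1 < p_2 < p_3 < ⋯, i.e., p_{n−1} < p_n for every n ≥ 2. (This resolves Stanley's conjecture.) -/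
/-!
Let `U` be the up operator of the poset on `ℝ^{P_k}` and `D = Uᵀ`. Stanley's relation
`DU = UD + r` makes `DU` positive definite, so `U` is injective and `p_k ≤ p_{k+1}`; moreover the
orthogonal projection of `𝟙 ∈ ℝ^{P_{k+1}}` onto the image of `U` has squared length
`z_k = ⟨D𝟙, (DU)⁻¹ D𝟙⟩ ≤ p_{k+1}`. Expanding the resolvents `(DU + t)⁻¹` along
`U (DU + t + r)⁻¹ = (DU + t)⁻¹ U` and `D𝟙 = U𝟙 + r𝟙` gives
`z_{k+2} - p_{k+2} = (p_{k+1} - p_k) + 2r⟨𝟙, (DU + 2r)⁻¹𝟙⟩ + r(r - 1)(⋯)`, with every term on the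
right nonnegative and the middle one positive, and a direct computation gives `z_1 > r = p_1`.
Hence `p_{k+1} < z_{k+1} ≤ p_{k+2}`.
-/

open Matrix Finset

lemma Matrix.transpose_mulVec_dotProduct_mulVec {m n R : Type*} [Fintype m] [Fintype n]
    [CommSemiring R] (A : Matrix m n R) (B : Matrix n n R) (v w : m → R) :
    Aᵀ *ᵥ v ⬝ᵥ B *ᵥ Aᵀ *ᵥ w = v ⬝ᵥ (A * B * Aᵀ) *ᵥ w := by
  rw [dotProduct_comm, dotProduct_transpose_mulVec, mulVec_mulVec, mulVec_mulVec]

/-- `A (AᵀA)⁻¹ Aᵀ` is the orthogonal projection onto the column space of `A`. -/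
lemma Matrix.transpose_mulVec_dotProduct_inv_mulVec_le {m n K : Type*} [Fintype m] [Fintype n]
    [DecidableEq n] [Field K] [LinearOrder K] [IsStrictOrderedRing K]
    (A : Matrix m n K) (hA : IsUnit (Aᵀ * A).det) (v : m → K) :
    Aᵀ *ᵥ v ⬝ᵥ (Aᵀ * A)⁻¹ *ᵥ Aᵀ *ᵥ v ≤ v ⬝ᵥ v := by
  set w := (Aᵀ * A)⁻¹ *ᵥ Aᵀ *ᵥ v
  set u := A *ᵥ w
  have hAu : Aᵀ *ᵥ u = Aᵀ *ᵥ v := by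
    simp only [u, w, mulVec_mulVec, ← Matrix.mul_assoc, mul_nonsing_inv _ hA, Matrix.one_mul]
  have hvu : Aᵀ *ᵥ v ⬝ᵥ w = v ⬝ᵥ u := by
    rw [dotProduct_comm, dotProduct_transpose_mulVec]
  have huu : u ⬝ᵥ u = v ⬝ᵥ u :=
    calc u ⬝ᵥ u = w ⬝ᵥ Aᵀ *ᵥ u := (dotProduct_transpose_mulVec A w u).symm
      _ = Aᵀ *ᵥ v ⬝ᵥ w := by rw [hAu, dotProduct_comm]
      _ = v ⬝ᵥ u := hvu
  have hsq : 0 ≤ (v - u) ⬝ᵥ (v - u) := Finset.sum_nonneg fun i _ => mul_self_nonneg _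
  rw [hvu]
  simp only [sub_dotProduct, dotProduct_sub, huu, dotProduct_comm u v] at hsq
  linarith

section DifferentialSequence

variable {ι : ℕ → Type*} [∀ k, Fintype (ι k)] [∀ k, DecidableEq (ι k)]

/-- `C k` is the matrix of the up operator `U : ℝ^{P_k} → ℝ^{P_{k+1}}` and `(C k)ᵀ` that of the
down operator `D`; the conditions are Stanley's relations `DU = UD + r` and `D𝟙 = U𝟙 + r𝟙`, with
`U = 0` below rank `0`. -/
structure IsDifferentialSequence (C : ∀ k, Matrix (ι (k + 1)) (ι k) ℝ) (r : ℝ) : Prop where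
  transpose_mul_self_zero : (C 0)ᵀ * C 0 = r • 1
  transpose_mul_self_succ : ∀ k, (C (k + 1))ᵀ * C (k + 1) = C k * (C k)ᵀ + r • 1
  transpose_mulVec_one_zero : (C 0)ᵀ *ᵥ 1 = r • 1
  transpose_mulVec_one_succ : ∀ k, (C (k + 1))ᵀ *ᵥ 1 = C k *ᵥ 1 + r • 1

/-- The resolvent `(DU + t)⁻¹` on `ℝ^{P_k}`. -/
noncomputable def gramInv (C : ∀ k, Matrix (ι (k + 1)) (ι k) ℝ) (k : ℕ) (t : ℝ) :
    Matrix (ι k) (ι k) ℝ :=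
  ((C k)ᵀ * C k + t • 1)⁻¹

lemma transpose_gramInv (C : ∀ k, Matrix (ι (k + 1)) (ι k) ℝ) (k : ℕ) (t : ℝ) :
    (gramInv C k t)ᵀ = gramInv C k t := by
  simp [gramInv, transpose_nonsing_inv]

lemma dotProduct_gramInv_mulVec_comm (C : ∀ k, Matrix (ι (k + 1)) (ι k) ℝ) (k : ℕ) (t : ℝ)
    (v w : ι k → ℝ) : v ⬝ᵥ gramInv C k t *ᵥ w = w ⬝ᵥ gramInv C k t *ᵥ v := by
  rw [← dotProduct_transpose_mulVec, transpose_gramInv]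

namespace IsDifferentialSequence

variable {C : ∀ k, Matrix (ι (k + 1)) (ι k) ℝ} {r : ℝ} (hC : IsDifferentialSequence C r)
include hC

lemma posDef_transpose_mul_self (hr : 0 < r) (k : ℕ) : ((C k)ᵀ * C k).PosDef := by
  cases k with
  | zero => rw [hC.transpose_mul_self_zero]; exact PosDef.one.smul hr
  | succ k =>
    rw [hC.transpose_mul_self_succ]
    simpa [conjTranspose_eq_transpose_of_trivial] using
      PosDef.posSemidef_add (posSemidef_self_mul_conjTranspose (C k)) (PosDef.one.smul hr)

lemma isUnit_det_gram_add (hr : 0 < r) (k : ℕ) {t : ℝ} (ht : 0 ≤ t) :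
    IsUnit ((C k)ᵀ * C k + t • 1).det :=
  (isUnit_iff_isUnit_det _).mp
    ((hC.posDef_transpose_mul_self hr k).add_posSemidef (PosSemidef.one.smul ht)).isUnit

lemma posDef_gramInv (hr : 0 < r) (k : ℕ) {t : ℝ} (ht : 0 ≤ t) : (gramInv C k t).PosDef :=
  ((hC.posDef_transpose_mul_self hr k).add_posSemidef (PosSemidef.one.smul ht)).inv

lemma card_le_card_succ (hr : 0 < r) (k : ℕ) : Fintype.card (ι k) ≤ Fintype.card (ι (k + 1)) :=
  calc Fintype.card (ι k) = ((C k)ᵀ * C k).rank :=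
        (rank_of_isUnit _ (hC.posDef_transpose_mul_self hr k).isUnit).symm
    _ ≤ (C k).rank := rank_mul_le_right _ _
    _ ≤ Fintype.card (ι (k + 1)) := rank_le_card_height _

lemma gramInv_zero (hr : 0 < r) {t : ℝ} (ht : 0 ≤ t) : gramInv C 0 t = (r + t)⁻¹ • 1 := by
  have : r + t ≠ 0 := by positivity
  rw [gramInv, hC.transpose_mul_self_zero, ← add_smul]
  exact inv_eq_right_inv (by rw [smul_mul_smul, Matrix.one_mul, mul_inv_cancel₀ this, one_smul])

lemma mul_gramInv_add (hr : 0 < r) (k : ℕ) {t : ℝ} (ht : 0 ≤ t) :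
    C k * gramInv C k (t + r) = gramInv C (k + 1) t * C k := by
  have hA := hC.isUnit_det_gram_add hr (k + 1) ht
  have hB := hC.isUnit_det_gram_add hr k (by positivity : 0 ≤ t + r)
  set A := (C (k + 1))ᵀ * C (k + 1) + t • (1 : Matrix _ _ ℝ)
  set B := (C k)ᵀ * C k + (t + r) • (1 : Matrix _ _ ℝ)
  have hAC : A * C k = C k * B := by
    simp only [A, B, hC.transpose_mul_self_succ, Matrix.add_mul, Matrix.mul_add, Matrix.mul_assoc,
      Matrix.smul_mul, Matrix.mul_smul, Matrix.one_mul, Matrix.mul_one, add_smul]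
    abel
  calc C k * B⁻¹ = A⁻¹ * (A * C k) * B⁻¹ := by rw [nonsing_inv_mul_cancel_left _ _ hA]
    _ = A⁻¹ * C k := by rw [hAC, ← Matrix.mul_assoc, mul_nonsing_inv_cancel_right _ _ hB]

lemma transpose_mul_gramInv_mul (hr : 0 < r) (k : ℕ) {t : ℝ} (ht : 0 ≤ t) :
    (C k)ᵀ * gramInv C (k + 1) t * C k = 1 - (t + r) • gramInv C k (t + r) := by
  have hB := hC.isUnit_det_gram_add hr k (by positivity : 0 ≤ t + r)
  have hCC : (C k)ᵀ * C k = ((C k)ᵀ * C k + (t + r) • 1) - (t + r) • 1 := by abel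
  rw [Matrix.mul_assoc, ← hC.mul_gramInv_add hr k ht, ← Matrix.mul_assoc, hCC, Matrix.sub_mul,
    gramInv, mul_nonsing_inv _ hB, Matrix.smul_mul, Matrix.one_mul]

lemma mul_gramInv_mul_transpose (hr : 0 < r) (k : ℕ) {t : ℝ} (ht : 0 ≤ t) :
    C k * gramInv C k (t + r) * (C k)ᵀ = 1 - (t + r) • gramInv C (k + 1) t := by
  have hA := hC.isUnit_det_gram_add hr (k + 1) ht
  have hCC : C k * (C k)ᵀ = ((C (k + 1))ᵀ * C (k + 1) + t • 1) - (t + r) • 1 := by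
    rw [hC.transpose_mul_self_succ, add_smul]; abel
  rw [hC.mul_gramInv_add hr k ht, Matrix.mul_assoc, hCC, Matrix.mul_sub, gramInv,
    nonsing_inv_mul _ hA, Matrix.mul_smul, Matrix.mul_one]

lemma dotProduct_gramInv_succ_mulVec (hr : 0 < r) (k : ℕ) {t : ℝ} (ht : 0 ≤ t)
    (v : ι (k + 1) → ℝ) (w : ι k → ℝ) :
    v ⬝ᵥ gramInv C (k + 1) t *ᵥ C k *ᵥ w = (C k)ᵀ *ᵥ v ⬝ᵥ gramInv C k (t + r) *ᵥ w := by
  rw [mulVec_mulVec, ← hC.mul_gramInv_add hr k ht, ← mulVec_mulVec, ← dotProduct_transpose_mulVec,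
    dotProduct_comm]

lemma dotProduct_gramInv_add_self (hr : 0 < r) (k : ℕ) {t : ℝ} (ht : 0 ≤ t) :
    (C k)ᵀ *ᵥ 1 ⬝ᵥ gramInv C k (t + r) *ᵥ (C k)ᵀ *ᵥ 1
      = Fintype.card (ι (k + 1)) - (t + r) * (1 ⬝ᵥ gramInv C (k + 1) t *ᵥ 1) := by
  rw [transpose_mulVec_dotProduct_mulVec, hC.mul_gramInv_mul_transpose hr k ht, sub_mulVec,
    one_mulVec, smul_mulVec, dotProduct_sub, dotProduct_smul, one_dotProduct_one,
    smul_eq_mul]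

lemma dotProduct_gramInv_succ_one (hr : 0 < r) (k : ℕ) {t : ℝ} (ht : 0 ≤ t) :
    (C (k + 1))ᵀ *ᵥ 1 ⬝ᵥ gramInv C (k + 1) t *ᵥ 1
      = (C k)ᵀ *ᵥ 1 ⬝ᵥ gramInv C k (t + r) *ᵥ 1 + r * (1 ⬝ᵥ gramInv C (k + 1) t *ᵥ 1) := by
  rw [dotProduct_gramInv_mulVec_comm, hC.transpose_mulVec_one_succ, mulVec_add, mulVec_smul,
    dotProduct_add, dotProduct_smul, hC.dotProduct_gramInv_succ_mulVec hr k ht, smul_eq_mul]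

lemma dotProduct_gramInv_succ_self (hr : 0 < r) (k : ℕ) {t : ℝ} (ht : 0 ≤ t) :
    (C (k + 1))ᵀ *ᵥ 1 ⬝ᵥ gramInv C (k + 1) t *ᵥ (C (k + 1))ᵀ *ᵥ 1
      = Fintype.card (ι k) - (t + r) * (1 ⬝ᵥ gramInv C k (t + r) *ᵥ 1)
        + 2 * r * ((C k)ᵀ *ᵥ 1 ⬝ᵥ gramInv C k (t + r) *ᵥ 1)
        + r ^ 2 * (1 ⬝ᵥ gramInv C (k + 1) t *ᵥ 1) := by
  have hUU : C k *ᵥ 1 ⬝ᵥ gramInv C (k + 1) t *ᵥ C k *ᵥ 1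
      = Fintype.card (ι k) - (t + r) * (1 ⬝ᵥ gramInv C k (t + r) *ᵥ 1) := by
    have h := transpose_mulVec_dotProduct_mulVec (C k)ᵀ (gramInv C (k + 1) t) 1 1
    rw [transpose_transpose] at h
    rw [h, hC.transpose_mul_gramInv_mul hr k ht, sub_mulVec, one_mulVec, smul_mulVec,
      dotProduct_sub, dotProduct_smul, one_dotProduct_one, smul_eq_mul]
  have hU1 := hC.dotProduct_gramInv_succ_mulVec hr k ht 1 1
  have h1U : C k *ᵥ 1 ⬝ᵥ gramInv C (k + 1) t *ᵥ 1 = (C k)ᵀ *ᵥ 1 ⬝ᵥ gramInv C k (t + r) *ᵥ 1 := by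
    rw [dotProduct_gramInv_mulVec_comm, hU1]
  rw [hC.transpose_mulVec_one_succ]
  simp only [mulVec_add, mulVec_smul, add_dotProduct, dotProduct_add, smul_dotProduct,
    dotProduct_smul, smul_eq_mul, hUU, hU1, h1U]
  ring

lemma one_dotProduct_gramInv_pos (hr : 0 < r) (k : ℕ) {t : ℝ} (ht : 0 ≤ t) [Nonempty (ι k)] :
    0 < 1 ⬝ᵥ gramInv C k t *ᵥ 1 := by
  simpa using (hC.posDef_gramInv hr k ht).dotProduct_mulVec_pos one_ne_zero

lemma dotProduct_gramInv_zero_le_card (hr : 0 < r) (k : ℕ) :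
    (C k)ᵀ *ᵥ 1 ⬝ᵥ gramInv C k 0 *ᵥ (C k)ᵀ *ᵥ 1 ≤ Fintype.card (ι (k + 1)) := by
  have hA := (isUnit_iff_isUnit_det _).mp (hC.posDef_transpose_mul_self hr k).isUnit
  simpa [gramInv, one_dotProduct_one] using transpose_mulVec_dotProduct_inv_mulVec_le (C k) hA 1

lemma dotProduct_gramInv_one_zero (hr : 0 < r) :
    (C 1)ᵀ *ᵥ 1 ⬝ᵥ gramInv C 1 0 *ᵥ (C 1)ᵀ *ᵥ 1
      = Fintype.card (ι 0) / 2 + r * Fintype.card (ι 0) + r ^ 2 * (1 ⬝ᵥ gramInv C 1 0 *ᵥ 1) := by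
  have h := hC.dotProduct_gramInv_succ_self hr 0 le_rfl
  rw [zero_add r, hC.gramInv_zero hr hr.le, hC.transpose_mulVec_one_zero] at h
  refine h.trans ?_
  simp only [smul_mulVec, one_mulVec, dotProduct_smul, smul_dotProduct, one_dotProduct_one,
    smul_eq_mul]
  field_simp
  ring

lemma dotProduct_gramInv_zero_sub_card (hr : 0 < r) (k : ℕ) :
    (C (k + 2))ᵀ *ᵥ 1 ⬝ᵥ gramInv C (k + 2) 0 *ᵥ (C (k + 2))ᵀ *ᵥ 1 - Fintype.card (ι (k + 2))
      = (Fintype.card (ι (k + 1)) - Fintype.card (ι k)) + 2 * r * (1 ⬝ᵥ gramInv C k (2 * r) *ᵥ 1)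
        + r * (r - 1) * (1 ⬝ᵥ gramInv C (k + 1) r *ᵥ 1 + 1 ⬝ᵥ gramInv C (k + 2) 0 *ᵥ 1) := by
  have h1 := hC.dotProduct_gramInv_succ_self hr (k + 1) le_rfl
  have h2 := hC.dotProduct_gramInv_succ_one hr k hr.le
  have h3 := hC.dotProduct_gramInv_succ_self hr k hr.le
  have h4 := hC.dotProduct_gramInv_add_self hr (k + 1) le_rfl
  simp only [zero_add, ← two_mul] at h1 h2 h3 h4
  linear_combination h1 + 2 * r * h2 - h3 + h4

theorem card_lt_card_succ (hr : 1 ≤ r) [Nonempty (ι 0)]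
    (h1 : (Fintype.card (ι 1) : ℝ) ≤ r * Fintype.card (ι 0)) (k : ℕ) :
    Fintype.card (ι (k + 1)) < Fintype.card (ι (k + 2)) := by
  have hr0 : 0 < r := by linarith
  have hmono : Monotone fun k => Fintype.card (ι k) :=
    monotone_nat_of_le_succ (hC.card_le_card_succ hr0)
  have hne (k : ℕ) : Nonempty (ι k) :=
    Fintype.card_pos_iff.mp (Fintype.card_pos.trans_le (hmono k.zero_le))
  have hpos (k : ℕ) {t : ℝ} (ht : 0 ≤ t) : 0 < 1 ⬝ᵥ gramInv C k t *ᵥ 1 :=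
    have := hne k; hC.one_dotProduct_gramInv_pos hr0 k ht
  suffices h : (Fintype.card (ι (k + 1)) : ℝ)
      < (C (k + 1))ᵀ *ᵥ 1 ⬝ᵥ gramInv C (k + 1) 0 *ᵥ (C (k + 1))ᵀ *ᵥ 1 by
    exact_mod_cast h.trans_le (hC.dotProduct_gramInv_zero_le_card hr0 (k + 1))
  cases k with
  | zero =>
    have hp0 : (0 : ℝ) < Fintype.card (ι 0) := by exact_mod_cast Fintype.card_pos
    have hX := mul_pos (pow_pos hr0 2) (hpos 1 le_rfl)
    rw [hC.dotProduct_gramInv_one_zero hr0]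
    linarith
  | succ k =>
    have hstep : (Fintype.card (ι k) : ℝ) ≤ Fintype.card (ι (k + 1)) := by
      exact_mod_cast hmono k.le_succ
    have hmid := mul_pos (mul_pos two_pos hr0) (hpos k (by positivity : 0 ≤ 2 * r))
    have htail := mul_nonneg (mul_nonneg hr0.le (sub_nonneg.mpr hr))
      (add_nonneg (hpos (k + 1) hr0.le).le (hpos (k + 2) le_rfl).le)
    linarith [hC.dotProduct_gramInv_zero_sub_card hr0 k]

end IsDifferentialSequence

end DifferentialSequence

lemma Set.ncard_eq_card_filter_subtype {α : Type*} {p : α → Prop} [Fintype {x // p x}]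
    {s : Set α} [DecidablePred (· ∈ s)] (hs : ∀ x ∈ s, p x) :
    s.ncard = #{a : {x // p x} | (a : α) ∈ s} := by
  have : s = Subtype.val '' {a : {x // p x} | (a : α) ∈ s} := by
    ext x
    exact ⟨fun hx => ⟨⟨x, hs x hx⟩, hx, rfl⟩, by rintro ⟨a, ha, rfl⟩; exact ha⟩
  conv_lhs => rw [this]
  rw [Set.ncard_image_of_injective _ Subtype.val_injective, Set.ncard_eq_toFinset_card']
  simp

section Poset

variable {α : Type*} [PartialOrder α]

lemma ncard_common_upper_covers [DecidableEq α] (r : ℕ)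
    (hD1 : ∀ x : α, {z : α | x ⋖ z}.ncard = {y : α | y ⋖ x}.ncard + r)
    (hD2 : ∀ x y : α, x ≠ y →
      {z : α | z ⋖ x ∧ z ⋖ y}.ncard = {z : α | x ⋖ z ∧ y ⋖ z}.ncard) (y z : α) :
    {a | y ⋖ a ∧ z ⋖ a}.ncard = {w | w ⋖ y ∧ w ⋖ z}.ncard + if y = z then r else 0 := by
  by_cases h : y = z
  · subst h
    simpa using hD1 y
  · simp [h, hD2 y z h]

lemma not_covBy_of_rank_zero {rk : α → ℕ} (hgrade : ∀ x y : α, x ⋖ y → rk y = rk x + 1)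
    {w y : α} (hy : rk y = 0) : ¬ w ⋖ y := fun h => by
  have := hgrade _ _ h
  omega

lemma eq_bot_of_rank_zero [OrderBot α] {rk : α → ℕ}
    (hgrade : ∀ x y : α, x ⋖ y → rk y = rk x + 1) (hdown : ∀ x : α, x ≠ ⊥ → ∃ y : α, y ⋖ x)
    {x : α} (hx : rk x = 0) : x = ⊥ := by
  by_contra h
  obtain ⟨y, hy⟩ := hdown x h
  exact not_covBy_of_rank_zero hgrade hx hy

variable (rk : α → ℕ) [∀ n, Fintype {x : α // rk x = n}]

open Classical in
/-- The matrix of the up operator from `ℝ^{P_k}` to `ℝ^{P_{k+1}}`. -/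
noncomputable def coverMatrix (k : ℕ) : Matrix {x // rk x = k + 1} {x // rk x = k} ℝ :=
  Matrix.of fun a x => if (x : α) ⋖ a then 1 else 0

variable {rk} (hgrade : ∀ x y : α, x ⋖ y → rk y = rk x + 1)
include hgrade

lemma transpose_coverMatrix_mul_apply (k : ℕ) (y z : {x // rk x = k}) :
    ((coverMatrix rk k)ᵀ * coverMatrix rk k) y z = {a | (y : α) ⋖ a ∧ (z : α) ⋖ a}.ncard := by
  classical
  rw [Set.ncard_eq_card_filter_subtype (p := fun x => rk x = k + 1)
    fun a ha => by rw [hgrade _ _ ha.1, y.2]]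
  simp [mul_apply, coverMatrix, ← ite_and, Finset.sum_boole, and_comm]

lemma coverMatrix_mul_transpose_apply (k : ℕ) (y z : {x // rk x = k + 1}) :
    (coverMatrix rk k * (coverMatrix rk k)ᵀ) y z = {w | w ⋖ (y : α) ∧ w ⋖ (z : α)}.ncard := by
  classical
  rw [Set.ncard_eq_card_filter_subtype (p := fun x => rk x = k)
    fun w hw => by have := hgrade _ _ hw.1; omega]
  simp [mul_apply, coverMatrix, ← ite_and, Finset.sum_boole, and_comm]

lemma transpose_coverMatrix_mulVec_one (k : ℕ) (y : {x // rk x = k}) :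
    ((coverMatrix rk k)ᵀ *ᵥ 1) y = {a | (y : α) ⋖ a}.ncard := by
  classical
  rw [Set.ncard_eq_card_filter_subtype (p := fun x => rk x = k + 1)
    fun a ha => by rw [hgrade _ _ ha, y.2]]
  simp [mulVec, dotProduct, coverMatrix, Finset.sum_boole]

lemma coverMatrix_mulVec_one (k : ℕ) (y : {x // rk x = k + 1}) :
    (coverMatrix rk k *ᵥ 1) y = {w | w ⋖ (y : α)}.ncard := by
  classical
  rw [Set.ncard_eq_card_filter_subtype (p := fun x => rk x = k)
    fun w hw => by have := hgrade _ _ hw; omega]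
  simp [mulVec, dotProduct, coverMatrix, Finset.sum_boole]

variable (r : ℕ) (hD1 : ∀ x : α, {z : α | x ⋖ z}.ncard = {y : α | y ⋖ x}.ncard + r)
include hD1

theorem isDifferentialSequence_coverMatrix [DecidableEq α]
    (hD2 : ∀ x y : α, x ≠ y →
      {z : α | z ⋖ x ∧ z ⋖ y}.ncard = {z : α | x ⋖ z ∧ y ⋖ z}.ncard) :
    IsDifferentialSequence (ι := fun k => {x // rk x = k}) (coverMatrix rk) r where
  transpose_mul_self_zero := by
    ext y z
    rw [transpose_coverMatrix_mul_apply hgrade, ncard_common_upper_covers r hD1 hD2]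
    simp [not_covBy_of_rank_zero hgrade y.2, one_apply, Subtype.ext_iff]
  transpose_mul_self_succ k := by
    ext y z
    rw [transpose_coverMatrix_mul_apply hgrade, ncard_common_upper_covers r hD1 hD2]
    simp [coverMatrix_mul_transpose_apply hgrade, one_apply, Subtype.ext_iff]
  transpose_mulVec_one_zero := by
    ext y
    rw [transpose_coverMatrix_mulVec_one hgrade, hD1]
    simp [not_covBy_of_rank_zero hgrade y.2]
  transpose_mulVec_one_succ k := by
    ext y
    rw [transpose_coverMatrix_mulVec_one hgrade, hD1]
    simp [coverMatrix_mulVec_one hgrade]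

variable [OrderBot α] (hbot : rk ⊥ = 0) (hdown : ∀ x : α, x ≠ ⊥ → ∃ y : α, y ⋖ x)
include hbot hdown

omit hD1 in
lemma card_rank_zero : Fintype.card {x // rk x = 0} = 1 :=
  Fintype.card_eq_one_iff.mpr
    ⟨⟨⊥, hbot⟩, fun x => Subtype.ext (eq_bot_of_rank_zero hgrade hdown x.2)⟩

lemma card_rank_one : Fintype.card {x // rk x = 1} = r := by
  have hcov : {a : α | ⊥ ⋖ a} = {a | rk a = 1} := by
    ext a
    refine ⟨fun h => by simp [hgrade _ _ h, hbot], fun (h : rk a = 1) => ?_⟩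
    obtain ⟨y, hy⟩ := hdown a (by rintro rfl; simp [hbot] at h)
    rwa [eq_bot_of_rank_zero hgrade hdown (x := y) (by have := hgrade _ _ hy; omega)] at hy
  rw [Fintype.card_eq_nat_card, ← Set.coe_ofPred, Nat.card_coe_set_eq, ← hcov, hD1]
  simp [not_covBy_of_rank_zero hgrade hbot]

end Poset

variable {α : Type*}

/-- **Stanley's conjecture.** The rank sizes of an `r`-differential poset strictly
increase from rank 1 onward: `p_1 < p_2 < p_3 < ⋯`. -/
theorem rank_sizes_strictly_increase [PartialOrder α] [OrderBot α]
    (rk : α → ℕ) (r : ℕ) [∀ n : ℕ, Fintype {x : α // rk x = n}]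
    (hr : 1 ≤ r) (hbot : rk ⊥ = 0)
    (hgrade : ∀ x y : α, x ⋖ y → rk y = rk x + 1)
    (hdown : ∀ x : α, x ≠ ⊥ → ∃ y : α, y ⋖ x)
    (hD1 : ∀ x : α, {z : α | x ⋖ z}.ncard = {y : α | y ⋖ x}.ncard + r)
    (hD2 : ∀ x y : α, x ≠ y →
      {z : α | z ⋖ x ∧ z ⋖ y}.ncard = {z : α | x ⋖ z ∧ y ⋖ z}.ncard)
    (n : ℕ) (hn : 1 ≤ n) :
    Fintype.card {x : α // rk x = n} < Fintype.card {x : α // rk x = n + 1} := by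
  classical
  obtain ⟨k, rfl⟩ : ∃ k, n = k + 1 := ⟨n - 1, by omega⟩
  have : Nonempty {x : α // rk x = 0} := ⟨⟨⊥, hbot⟩⟩
  refine (isDifferentialSequence_coverMatrix hgrade r hD1 hD2).card_lt_card_succ
    (by exact_mod_cast hr) ?_ k
  simp [card_rank_zero hgrade hbot hdown, card_rank_one hgrade r hD1 hbot hdown]
end

section
/- Let P be an r-differential poset with r ≥ 2, and let t_0 ⋖ t_1 ⋖ ⋯ and s_0 ⋖ s_1 ⋖ ⋯ be saturated chains with rank(t_m) = rank(s_m) = m, each t_m and s_m covering at most one element of P, t_0 = s_0, and t_m ≠ s_m for all m ≥ 1. Then for all 0 ≤ j ≤ n, the coefficient of s_n in U^j t_{n−j} ∈ ℤP_n equals 1 if j = n and 0 if j ≤ n−1; equivalently ⟨U^j t_{n−j}, s_n⟩ = δ_{j,n}, where ⟨−,−⟩ is the bilinear form on ℤP_n making P_n orthonormal. -/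
open Matrix

variable {α : Type*}

open Classical in
lemma chain_unique_aux [PartialOrder α] (rk : α → ℕ)
    [∀ n : ℕ, Fintype {x : α // rk x = n}]
    (hgrade : ∀ x y : α, x ⋖ y → rk y = rk x + 1)
    (s : ℕ → α) (hschain : ∀ m : ℕ, s m ⋖ s (m + 1))
    (hrks : ∀ m : ℕ, rk (s m) = m)
    (hcovs : ∀ m : ℕ, {z : α | z ⋖ s m}.ncard ≤ 1)
    (m : ℕ) (z : α) (hz : z ⋖ s (m + 1)) : z = s m := by
  have hsub : {w : α | w ⋖ s (m + 1)} ⊆ {w : α | rk w = m} := by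
    intro w hw
    have h1 := hgrade w (s (m + 1)) hw
    have h2 := hrks (m + 1)
    simp only [Set.mem_setOf_eq] at *
    omega
  have hf : Finite {x : α // rk x = m} := Finite.of_fintype _
  have hfin : ({w : α | w ⋖ s (m + 1)}).Finite :=
    (Set.finite_coe_iff.mp hf).subset hsub
  exact (Set.ncard_le_one_iff hfin).mp (hcovs (m + 1)) hz (hschain m)

open Classical in
lemma upIter_at_s [PartialOrder α] (rk : α → ℕ)
    [∀ n : ℕ, Fintype {x : α // rk x = n}]
    (hgrade : ∀ x y : α, x ⋖ y → rk y = rk x + 1)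
    (s : ℕ → α) (hschain : ∀ m : ℕ, s m ⋖ s (m + 1))
    (hrks : ∀ m : ℕ, rk (s m) = m)
    (hcovs : ∀ m : ℕ, {z : α | z ⋖ s m}.ncard ≤ 1)
    (m : ℕ) (j : ℕ) (v : {x : α // rk x = m} → ℚ) :
    upIter rk m j v ⟨s (m + j), hrks (m + j)⟩ = v ⟨s m, hrks m⟩ := by
  induction j with
  | zero => rfl
  | succ j ih =>
    have hsum : upIter rk m (j + 1) v ⟨s (m + (j + 1)), hrks (m + (j + 1))⟩
        = ∑ x : {x : α // rk x = m + j},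
            (if x.1 ⋖ s (m + j + 1) then (1 : ℚ) else 0) * upIter rk m j v x := rfl
    rw [hsum, Finset.sum_eq_single (⟨s (m + j), hrks (m + j)⟩ : {x : α // rk x = m + j})]
    · rw [if_pos (hschain (m + j)), one_mul, ih]
    · intro b _ hb
      rw [if_neg, zero_mul]
      intro hcov
      exact hb (Subtype.ext (chain_unique_aux rk hgrade s hschain hrks hcovs (m + j) b.1 hcov))
    · intro h
      exact absurd (Finset.mem_univ _) h

/-- For `r ≥ 2` and the fixed pair of chains, the coefficient of `s_n` in
`U^j t_{n-j}` is `1` if `j = n` and `0` if `j ≤ n - 1`. -/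
theorem coeff_of_s_in_upIter_t [PartialOrder α] [OrderBot α]
    (rk : α → ℕ) (r : ℕ) [∀ n : ℕ, Fintype {x : α // rk x = n}]
    (hr : 2 ≤ r) (hbot : rk ⊥ = 0)
    (hgrade : ∀ x y : α, x ⋖ y → rk y = rk x + 1)
    (hdown : ∀ x : α, x ≠ ⊥ → ∃ y : α, y ⋖ x)
    (hD1 : ∀ x : α, {z : α | x ⋖ z}.ncard = {y : α | y ⋖ x}.ncard + r)
    (hD2 : ∀ x y : α, x ≠ y →
      {z : α | z ⋖ x ∧ z ⋖ y}.ncard = {z : α | x ⋖ z ∧ y ⋖ z}.ncard)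
    (t : ℕ → α) (htchain : ∀ m : ℕ, t m ⋖ t (m + 1))
    (hrkt : ∀ m : ℕ, rk (t m) = m)
    (hcovt : ∀ m : ℕ, {z : α | z ⋖ t m}.ncard ≤ 1)
    (s : ℕ → α) (hschain : ∀ m : ℕ, s m ⋖ s (m + 1))
    (hrks : ∀ m : ℕ, rk (s m) = m)
    (hcovs : ∀ m : ℕ, {z : α | z ⋖ s m}.ncard ≤ 1)
    (h0 : t 0 = s 0) (hne : ∀ m : ℕ, 1 ≤ m → t m ≠ s m)
    (n j : ℕ) (hj : j ≤ n) :
    rankCast rk ((n - j) + j) n (upIter rk (n - j) j (basisVec rk (n - j) (t (n - j))))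
        ⟨s n, hrks n⟩
      = if j = n then 1 else 0 := by
  have hnj : (n - j) + j = n := Nat.sub_add_cancel hj
  have hrk : rk (s n) = (n - j) + j := (hrks n).trans hnj.symm
  have he : (⟨s n, hrk⟩ : {x : α // rk x = (n - j) + j})
      = ⟨s ((n - j) + j), hrks ((n - j) + j)⟩ := Subtype.ext (congrArg s hnj.symm)
  unfold rankCast
  rw [dif_pos hrk, he, upIter_at_s rk hgrade s hschain hrks hcovs]
  unfold basisVec
  by_cases hjn : j = n
  · subst hjn
    simp [← h0]
  · rw [if_neg hjn, if_neg]
    intro h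
    exact hne (n - j) (by omega) h.symm
end

section
/- Let P be a 1-differential poset, and let t_0 ⋖ t_1 ⋖ ⋯ and s_0 ⋖ s_1 ⋖ ⋯ be saturated chains with rank(t_m) = rank(s_m) = m, each t_m and s_m covering at most one element of P, t_0 = s_0, t_1 = s_1, and t_m ≠ s_m for all m ≥ 2. Then for n ≥ 2 and 0 ≤ j ≤ n, the coefficient of s_n in U^j t_{n−j} ∈ ℤP_n equals 1 if j ∈ {n−1, n} and 0 if j ≤ n−2; i.e., ⟨U^j t_{n−j}, s_n⟩ = 1 for j = n or j = n−1, and = 0 for j ≤ n−2, where ⟨−,−⟩ is the bilinear form on ℤP_n making P_n orthonormal. -/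
open Matrix

variable {α : Type*}

/-- For a `1`-differential poset and the fixed pair of chains, for `n ≥ 2`
the coefficient of `s_n` in `U^j t_{n-j}` is `1` if `j ∈ {n-1, n}` and `0`
if `j ≤ n - 2`. -/
theorem coeff_of_s_in_upIter_t_one_differential [PartialOrder α] [OrderBot α]
    (rk : α → ℕ) [∀ n : ℕ, Fintype {x : α // rk x = n}]
    (hbot : rk ⊥ = 0)
    (hgrade : ∀ x y : α, x ⋖ y → rk y = rk x + 1)
    (hdown : ∀ x : α, x ≠ ⊥ → ∃ y : α, y ⋖ x)
    (hD1 : ∀ x : α, {z : α | x ⋖ z}.ncard = {y : α | y ⋖ x}.ncard + 1)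
    (hD2 : ∀ x y : α, x ≠ y →
      {z : α | z ⋖ x ∧ z ⋖ y}.ncard = {z : α | x ⋖ z ∧ y ⋖ z}.ncard)
    (t : ℕ → α) (htchain : ∀ m : ℕ, t m ⋖ t (m + 1))
    (hrkt : ∀ m : ℕ, rk (t m) = m)
    (hcovt : ∀ m : ℕ, {z : α | z ⋖ t m}.ncard ≤ 1)
    (s : ℕ → α) (hschain : ∀ m : ℕ, s m ⋖ s (m + 1))
    (hrks : ∀ m : ℕ, rk (s m) = m)
    (hcovs : ∀ m : ℕ, {z : α | z ⋖ s m}.ncard ≤ 1)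
    (h0 : t 0 = s 0) (h1 : t 1 = s 1) (hne : ∀ m : ℕ, 2 ≤ m → t m ≠ s m)
    (n : ℕ) (hn : 2 ≤ n) (j : ℕ) (hj : j ≤ n) :
    rankCast rk ((n - j) + j) n (upIter rk (n - j) j (basisVec rk (n - j) (t (n - j))))
        ⟨s n, hrks n⟩
      = if j = n ∨ j = n - 1 then 1 else 0 := by
  -- uniqueness of the element covered by s (m+1)
  have hs_unique : ∀ m : ℕ, ∀ z : α, z ⋖ s (m + 1) → z = s m := by
    intro m z hz
    have hfin : {z : α | z ⋖ s (m + 1)}.Finite := by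
      apply Set.Finite.subset (Set.finite_range (fun x : {x : α // rk x = m} => (x : α)))
      intro w hw
      have h1 := hgrade w (s (m + 1)) hw
      have h2 := hrks (m + 1)
      exact ⟨⟨w, by omega⟩, rfl⟩
    by_contra hne'
    have h2 : 1 < {z : α | z ⋖ s (m + 1)}.ncard := by
      rw [Set.one_lt_ncard_iff hfin]
      exact ⟨z, s m, hz, hschain m, hne'⟩
    have := hcovs (m + 1)
    omega
  -- key lemma: U^j applied at s (m+j) picks out the coefficient at s m
  have key : ∀ (j m : ℕ) (v : {x : α // rk x = m} → ℚ) (x : {x : α // rk x = m + j}),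
      x.1 = s (m + j) → upIter rk m j v x = v ⟨s m, hrks m⟩ := by
    intro j
    induction j with
    | zero =>
      intro m v x hx
      have : x = (⟨s m, hrks m⟩ : {x : α // rk x = m}) := Subtype.ext hx
      rw [show upIter rk m 0 v = v from rfl, this]
    | succ j ih =>
      intro m v x hx
      show (upMat rk (m + j)).mulVec (upIter rk m j v) x = v ⟨s m, hrks m⟩
      rw [Matrix.mulVec, dotProduct,
        Fintype.sum_eq_single (⟨s (m + j), hrks (m + j)⟩ : {x : α // rk x = m + j})]
      · have hcov : s (m + j) ⋖ x.1 := by rw [hx]; exact hschain (m + j)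
        rw [upMat, Matrix.of_apply, if_pos hcov, one_mul]
        exact ih m v _ rfl
      · intro y hy
        have : ¬ (y.1 ⋖ x.1) := by
          intro hc
          rw [hx] at hc
          exact hy (Subtype.ext (hs_unique (m + j) y.1 hc))
        rw [upMat, Matrix.of_apply, if_neg this, zero_mul]
  have hm : n - j + j = n := Nat.sub_add_cancel hj
  rw [rankCast]
  rw [dif_pos (show rk (s n) = n - j + j by rw [hrks]; omega)]
  rw [key j (n - j) _ _ (by show s n = s (n - j + j); rw [hm])]
  rw [basisVec]
  by_cases hc : j = n ∨ j = n - 1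
  · rw [if_pos hc]
    rcases hc with h | h
    · have h0' : n - j = 0 := by omega
      rw [if_pos (by show s (n - j) = t (n - j); rw [h0']; exact h0.symm)]
    · have h1' : n - j = 1 := by omega
      rw [if_pos (by show s (n - j) = t (n - j); rw [h1']; exact h1.symm)]
  · rw [if_neg hc]
    have h2' : 2 ≤ n - j := by omega
    rw [if_neg (fun h => hne (n - j) h2' h.symm)]
end
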